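/- arXiv:1801.09422 — 8 statements merged into one kernel-verified Lean document; each statement's English description precedes it below -/
import Mathlib

section
/- Let G be a finite group, π a set of primes, N a normal nilpotent Hall π-subgroup of G with abelian complement K. Let x ∈ N be a π-element and k ∈ K. Then the set C = {g ∈ G : the π-part of g is conjugate to x, and g = n·k for some n ∈ N} is contained in a single conjugacy class of G (any two elements of C are conjugate in G). -/
/-!
Conjugating by an element that moves the `π`-part onto `x` turns each `gᵢ` into `x * vᵢ`, where
`vᵢ` is a `π'`-element commuting with `x`. As `G ⧸ N ≅ K` is abelian, conjugation fixes the coset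
`N k`, so `v₁⁻¹ v₂ ∈ N`. In the centraliser of `x`, the elements `v₁` and `v₂` therefore lie in one
coset of the normal nilpotent `π`-subgroup `N ∩ C(x)` and have coprime orders, so they are conjugate
by an element of `N ∩ C(x)`, which fixes `x`. This coprime conjugacy is proved by induction on the
order of the nilpotent subgroup, dividing out its centre; the abelian case is the vanishing of the
first cohomology of a cyclic group acting on an abelian group of coprime order.
-/

open Subgroup Finset

/-- `h` is the `π`-part of `g`: `h` lies in the cyclic group generated by `g`,
its order is a `π`-number, and `g = h * h'` for some `h'` in `⟨g⟩` whose order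
is a `π'`-number. -/
def IsPiPart {G : Type*} [Group G] (π : Set ℕ) (g h : G) : Prop :=
  h ∈ Subgroup.zpowers g ∧ (∀ p : ℕ, p.Prime → p ∣ orderOf h → p ∈ π) ∧
    ∃ h' ∈ Subgroup.zpowers g, g = h * h' ∧
      ∀ p : ℕ, p.Prime → p ∣ orderOf h' → p ∉ π

theorem MonoidHom.exists_map_div_eq_of_coprime {A : Type*} [CommGroup A] (ψ : A →* A) {z : A}
    {c : ℕ → A} (hc₀ : c 0 = 1) (hc : ∀ n, c (n + 1) = ψ (c n) * z) {d : ℕ} (hcd : c d = 1)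
    (hd : (Nat.card A).Coprime d) : ∃ t, ψ t / t = z := by
  -- `s = ∏_{n<d} c n` satisfies `ψ s / s = z⁻ᵈ`, so a `d`-th root of `s⁻¹` works
  set f : A →* A := ψ / MonoidHom.id A
  have hf : ∀ t, f t = ψ t / t := fun _ => rfl
  have hshift : ∏ n ∈ Finset.range d, c (n + 1) = ∏ n ∈ Finset.range d, c n := by
    simpa [hc₀, hcd] using (prod_range_succ' c d).symm.trans (prod_range_succ c d)
  have hfs : f (∏ n ∈ Finset.range d, c n) = (z ^ d)⁻¹ := by
    have hψc : ∀ n, ψ (c n) = c (n + 1) / z := fun n => eq_div_of_mul_eq' (hc n).symm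
    rw [hf, map_prod, prod_congr rfl fun n _ => hψc n, prod_div_distrib, prod_const,
      Finset.card_range, hshift, div_div_cancel_left]
  set t := (powCoprime hd).symm (∏ n ∈ Finset.range d, c n)⁻¹
  have ht : t ^ d = (∏ n ∈ Finset.range d, c n)⁻¹ := (powCoprime hd).apply_symm_apply _
  refine ⟨t, (powCoprime hd).injective ?_⟩
  rw [powCoprime_apply, powCoprime_apply, ← hf, ← map_pow, ht, map_inv, hfs, inv_inv]

open scoped IsMulCommutative in
theorem exists_mem_conj_eq_of_isMulCommutative {L : Type*} [Group L] (Z : Subgroup L) [Z.Normal]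
    [IsMulCommutative Z] {a b : L} (ha : (orderOf a).Coprime (Nat.card Z))
    (hb : (orderOf b).Coprime (Nat.card Z)) (hab : a⁻¹ * b ∈ Z) : ∃ t ∈ Z, t * a * t⁻¹ = b := by
  have hpow : ∀ n : ℕ, (a ^ n)⁻¹ * b ^ n ∈ Z := fun n => by
    rw [← QuotientGroup.eq, QuotientGroup.mk_pow, QuotientGroup.mk_pow, QuotientGroup.eq.mpr hab]
  set c : ℕ → Z := fun n => ⟨(a ^ n)⁻¹ * b ^ n, hpow n⟩
  obtain ⟨t, ht⟩ := (MulAut.conjNormal a⁻¹).toMonoidHom.exists_map_div_eq_of_coprime (z := ⟨_, hab⟩)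
    (c := c) (d := orderOf a * orderOf b) (by ext; simp [c])
    (fun n => by
      ext
      simp only [c, pow_succ' a, pow_succ b, MulEquiv.toMonoidHom_eq_coe, MonoidHom.coe_coe,
        Subgroup.coe_mul, MulAut.conjNormal_apply]
      group)
    (by ext; simp [c, pow_mul, pow_mul' b, pow_orderOf_eq_one])
    (Nat.Coprime.mul_right ha.symm hb.symm)
  refine ⟨t, t.2, ?_⟩
  have ht' : a⁻¹ * t * a / t = a⁻¹ * b := by simpa using congrArg Subtype.val ht
  rw [← mul_right_inj a⁻¹, ← ht', div_eq_mul_inv]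
  group

theorem Subgroup.card_map_mk'_mul_card {L : Type*} [Group L] {M Z : Subgroup L} [Z.Normal]
    (hZM : Z ≤ M) : Nat.card (M.map (QuotientGroup.mk' Z)) * Nat.card Z = Nat.card M := by
  set ρ := (QuotientGroup.mk' Z).comp M.subtype
  have hrange : ρ.range = M.map (QuotientGroup.mk' Z) := by
    rw [MonoidHom.range_comp, range_subtype]
  have hker : ρ.ker = Z.subgroupOf M := by
    ext; simp [ρ, mem_subgroupOf]
  rw [← hrange, ← index_ker, ← Nat.card_congr (subgroupOfEquivOfLe hZM).toEquiv, ← hker, mul_comm,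
    card_mul_index]

theorem exists_mem_conj_eq_of_isNilpotent {L : Type*} [Group L] [Finite L] (M : Subgroup L)
    [M.Normal] [Group.IsNilpotent M] {a b : L} (ha : (orderOf a).Coprime (Nat.card M))
    (hb : (orderOf b).Coprime (Nat.card M)) (hab : a⁻¹ * b ∈ M) : ∃ t ∈ M, t * a * t⁻¹ = b := by
  induction hn : Nat.card M using Nat.strong_induction_on generalizing L with
  | _ n ih =>
  rcases subsingleton_or_nontrivial M with hM | hM
  · refine ⟨1, one_mem M, ?_⟩
    rw [← inv_mul_eq_one.mp (congrArg Subtype.val (Subsingleton.elim (⟨_, hab⟩ : M) 1))]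
    group
  set Z := (center M).map M.subtype
  have hZM : Z ≤ M := map_subtype_le _
  have hZ : 1 < Nat.card Z := (one_lt_card_iff_ne_bot Z).mpr <|
    (map_eq_bot_iff_of_injective _ M.subtype_injective).not.mpr (Group.IsNilpotent.center_ne_bot M)
  set q := QuotientGroup.mk' Z
  have hcard := card_map_mk'_mul_card hZM
  have hdvd : Nat.card (M.map q) ∣ Nat.card M := Dvd.intro _ hcard
  have : (M.map q).Normal := Normal.map inferInstance q (QuotientGroup.mk'_surjective Z)
  have : Group.IsNilpotent (M.map q) := Group.nilpotent_of_surjective _ (q.subgroupMap_surjective M)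
  obtain ⟨t₀, ht₀M, ht₀⟩ : ∃ t₀ ∈ M, q (t₀ * a * t₀⁻¹) = q b := by
    obtain ⟨s, hs, hsab⟩ := ih _ (hn ▸ hcard ▸ lt_mul_of_one_lt_right Nat.card_pos hZ)
      (M.map q) ((ha.coprime_dvd_right hdvd).coprime_dvd_left (orderOf_map_dvd q a))
      ((hb.coprime_dvd_right hdvd).coprime_dvd_left (orderOf_map_dvd q b))
      (by simpa using mem_map_of_mem q hab) rfl
    obtain ⟨t₀, ht₀, rfl⟩ := mem_map.mp hs
    exact ⟨t₀, ht₀, by simpa using hsab⟩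
  have hZdvd := card_dvd_of_le hZM
  obtain ⟨t₁, ht₁Z, ht₁⟩ := exists_mem_conj_eq_of_isMulCommutative Z (a := t₀ * a * t₀⁻¹)
    (by rw [← (show SemiconjBy t₀ a (t₀ * a * t₀⁻¹) by simp [SemiconjBy]).orderOf_eq]
        exact ha.coprime_dvd_right hZdvd) (hb.coprime_dvd_right hZdvd)
    (QuotientGroup.eq.mp ht₀)
  exact ⟨t₁ * t₀, mul_mem (hZM ht₁Z) ht₀M, by rw [← ht₁]; group⟩

theorem IsPiPart.exists_isConj_mul {G : Type*} [Group G] {π : Set ℕ} {g h x : G}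
    (hgh : IsPiPart π g h) (hx : IsConj h x) :
    ∃ v, IsConj g (x * v) ∧ Commute x v ∧ ∀ p : ℕ, p.Prime → p ∣ orderOf v → p ∉ π := by
  obtain ⟨hh, -, h', hh', hg, hh'π⟩ := hgh
  have hcomm : Commute h h' := by
    obtain ⟨i, rfl⟩ := mem_zpowers_iff.mp hh
    obtain ⟨j, rfl⟩ := mem_zpowers_iff.mp hh'
    exact Commute.zpow_zpow_self g i j
  obtain ⟨c, rfl⟩ := isConj_iff.mp hx
  subst hg
  refine ⟨MulAut.conj c h', isConj_iff.mpr ⟨c, ?_⟩, ?_, ?_⟩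
  · simp only [MulAut.conj_apply]; group
  · simpa only [MulAut.conj_apply] using hcomm.map (MulAut.conj c)
  · rwa [MulEquiv.orderOf_eq]

theorem Subgroup.IsComplement'.mk_eq_of_isConj {G : Type*} [Group G] {N K : Subgroup G} [N.Normal]
    (hNK : N.IsComplement' K) (hK : ∀ a b : K, a * b = b * a) {g g' : G} (h : IsConj g g') :
    (g : G ⧸ N) = g' := by
  obtain ⟨c, rfl⟩ := isConj_iff.mp h
  have hcomm : (c : G ⧸ N) * g = g * c :=
    hNK.symm.QuotientMulEquiv.injective (by simp only [map_mul, hK])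
  simp only [QuotientGroup.mk_mul, QuotientGroup.mk_inv, hcomm, mul_inv_cancel_right]

theorem isConj_mul_of_commute {G : Type*} [Group G] [Finite G] (N : Subgroup G) [N.Normal]
    [Group.IsNilpotent N] {x v w : G} (hv : Commute x v) (hw : Commute x w)
    (hvN : (orderOf v).Coprime (Nat.card N)) (hwN : (orderOf w).Coprime (Nat.card N))
    (hvw : v⁻¹ * w ∈ N) : IsConj (x * v) (x * w) := by
  set C := centralizer {x}
  have hmem : ∀ {y}, Commute x y → y ∈ C := fun h => mem_centralizer_singleton_iff.mpr h.eq.symm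
  set ι : N.subgroupOf C →* N :=
    (C.subtype.comp (N.subgroupOf C).subtype).codRestrict N fun y => y.2
  have hι : Function.Injective ι :=
    (MonoidHom.injective_codRestrict _ _ _).mpr (C.subtype_injective.comp (subtype_injective _))
  have : Group.IsNilpotent (N.subgroupOf C) := Subgroup.isNilpotent_of_ker_le_center ι (by
    rw [(MonoidHom.ker_eq_bot_iff ι).mpr hι]; exact bot_le)
  have hdvd := card_dvd_of_injective ι hι
  obtain ⟨t, -, ht⟩ := exists_mem_conj_eq_of_isNilpotent (N.subgroupOf C)
    (a := ⟨v, hmem hv⟩) (b := ⟨w, hmem hw⟩) (by rw [orderOf_mk]; exact hvN.coprime_dvd_right hdvd)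
    (by rw [orderOf_mk]; exact hwN.coprime_dvd_right hdvd) hvw
  refine isConj_iff.mpr ⟨t, ?_⟩
  have htx : (t : G) * x = x * t := mem_centralizer_singleton_iff.mp t.2
  rw [← show (t : G) * v * (t : G)⁻¹ = w from congrArg Subtype.val ht,
    ← mul_assoc (t : G) x v, htx]
  group

theorem conj_class_of_pi_part_general {G : Type*} [Group G] [Fintype G] (π : Set ℕ)
    (N K : Subgroup G) (hNnormal : N.Normal) (hNnilp : Group.IsNilpotent N)
    (hHallπ : ∀ p : ℕ, p.Prime → p ∣ Nat.card N → p ∈ π)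
    (hcompl : N.IsComplement' K) (hKab : ∀ a b : K, a * b = b * a)
    (x : G)
    (k : G)
    (g₁ g₂ : G)
    (h₁ : (∃ h : G, IsPiPart π g₁ h ∧ IsConj h x) ∧ ∃ n ∈ N, g₁ = n * k)
    (h₂ : (∃ h : G, IsPiPart π g₂ h ∧ IsConj h x) ∧ ∃ n ∈ N, g₂ = n * k) :
    IsConj g₁ g₂ := by
  have hcoset : ∀ {g y : G}, (∃ n ∈ N, g = n * k) → IsConj g y → (y : G ⧸ N) = k := by
    rintro g y ⟨n, hn, rfl⟩ hy
    rw [← hcompl.mk_eq_of_isConj hKab hy, QuotientGroup.mk_mul,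
      (QuotientGroup.eq_one_iff n).mpr hn, one_mul]
  have hcop : ∀ {v : G}, (∀ p : ℕ, p.Prime → p ∣ orderOf v → p ∉ π) →
      (orderOf v).Coprime (Nat.card N) :=
    fun hv => Nat.coprime_of_dvd fun p hp hpv hpN => hv p hp hpv (hHallπ p hp hpN)
  obtain ⟨⟨_, hpart₁, hconj₁⟩, hmem₁⟩ := h₁
  obtain ⟨⟨_, hpart₂, hconj₂⟩, hmem₂⟩ := h₂
  obtain ⟨v₁, hg₁, hv₁, hv₁π⟩ := hpart₁.exists_isConj_mul hconj₁
  obtain ⟨v₂, hg₂, hv₂, hv₂π⟩ := hpart₂.exists_isConj_mul hconj₂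
  have hv : v₁⁻¹ * v₂ ∈ N := by
    rw [← QuotientGroup.eq, ← mul_right_inj (x : G ⧸ N), ← QuotientGroup.mk_mul,
      ← QuotientGroup.mk_mul, hcoset hmem₁ hg₁, hcoset hmem₂ hg₂]
  exact hg₁.trans ((isConj_mul_of_commute N hv₁ hv₂ (hcop hv₁π) (hcop hv₂π) hv).trans hg₂.symm)

/-- Lemma 3.1: if `N` is a normal nilpotent Hall `π`-subgroup of the finite group `G`
with abelian complement `K`, `x ∈ N` is a `π`-element and `k ∈ K`, then any two
elements of `G` whose `π`-part is conjugate to `x` and which lie in the coset `N·k`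
are conjugate in `G`. -/
theorem conj_class_of_pi_part {G : Type*} [Group G] [Fintype G] (π : Set ℕ)
    (N K : Subgroup G) (hNnormal : N.Normal) (hNnilp : Group.IsNilpotent N)
    (hHallπ : ∀ p : ℕ, p.Prime → p ∣ Nat.card N → p ∈ π)
    (hHallπ' : ∀ p : ℕ, p.Prime → p ∣ N.index → p ∉ π)
    (hcompl : N.IsComplement' K) (hKab : ∀ a b : K, a * b = b * a)
    (x : G) (hx : x ∈ N) (hxπ : ∀ p : ℕ, p.Prime → p ∣ orderOf x → p ∈ π)
    (k : G) (hk : k ∈ K)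
    (g₁ g₂ : G)
    (h₁ : (∃ h : G, IsPiPart π g₁ h ∧ IsConj h x) ∧ ∃ n ∈ N, g₁ = n * k)
    (h₂ : (∃ h : G, IsPiPart π g₂ h ∧ IsConj h x) ∧ ∃ n ∈ N, g₂ = n * k) :
    IsConj g₁ g₂ :=
  conj_class_of_pi_part_general π N K hNnormal hNnilp hHallπ hcompl hKab x k g₁ g₂ h₁ h₂
end

section
/- Let G be a finite group, p a prime, and O a ring of algebraic integers in which p is totally ramified. Let u = Σ u_g g be a normalized torsion unit in OG of order p^j·m with m ≠ 1, and let 𝔭 be a prime ideal of O containing pO. Then for every s ∈ G, the sum of ε_x(u) over conjugacy classes x^G with x^{p^j} conjugate to s is congruent to ε_s(u^{p^j}) modulo 𝔭. -/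
open scoped Classical

/-!
Reducing modulo `𝔭` lands in a ring of `p` elements, so it suffices to work in `RG` for a
commutative ring `R` of characteristic `p`. The sum of the coefficients of `v ^ p` over a
union of conjugacy classes is a sum over `p`-tuples `(g₁, …, g_p)` whose product lies in that
union, weighted by `∏ v_{gᵢ}`. Cyclic rotation of the tuple preserves the weight and the
conjugacy class of the product, and its non-constant orbits have length `p`; modulo `p` only
the constant tuples `(x, …, x)` survive, contributing `v_x ^ p` at `x ^ p`. Since Frobenius is
additive this iterates to `p ^ j`, and `r ^ p ^ j = r` in a ring of `p` elements.
-/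

open Finset MulAction

theorem IsPGroup.sum_eq_sum_fixedPoints {p : ℕ} [Fact p.Prime] {H α R : Type*} [Group H]
    [MulAction H α] [Fintype α] [CommRing R] (hH : IsPGroup p H) (hpR : (p : R) = 0)
    {F : α → R} (hF : ∀ (h : H) x, F (h • x) = F x) :
    ∑ x, F x = ∑ x with x ∈ fixedPoints H α, F x := by
  rw [← sum_filter_add_sum_filter_not univ (· ∈ fixedPoints H α), add_eq_left,
    ← sum_fiberwise _ (Quotient.mk (orbitRel H α))]
  refine sum_eq_zero fun ω _ => ?_
  obtain ⟨b, rfl⟩ := Quotient.exists_rep ω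
  simp only [filter_filter, Quotient.eq, orbitRel_apply]
  by_cases hb : b ∈ fixedPoints H α
  · refine sum_eq_zero fun x hx => ?_
    obtain ⟨-, hx, h, rfl⟩ := mem_filter.1 hx
    exact absurd (show h • b ∈ _ by rw [hb h]; exact hb) hx
  have hfree : ∀ x ∈ orbit H b, x ∉ fixedPoints H α := by
    rintro _ ⟨h, rfl⟩ hx
    have hhb : h • b = b := by simpa using (hx h⁻¹).symm
    exact hb (hhb ▸ hx)
  have horbit :
      ({x | x ∉ fixedPoints H α ∧ x ∈ orbit H b} : Finset α) = (orbit H b).toFinset := by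
    ext x
    simpa using hfree x
  have hconst : ∀ x ∈ (orbit H b).toFinset, F x = F b := by
    intro x hx
    obtain ⟨h, rfl⟩ := Set.mem_toFinset.1 hx
    exact hF h b
  obtain ⟨k, hk⟩ := hH.card_orbit b
  have hk0 : k ≠ 0 := by
    rintro rfl
    exact hb (mem_fixedPoints_iff_card_orbit_eq_one.2 (by rwa [← Nat.card_eq_fintype_card]))
  rw [horbit, sum_congr rfl hconst, sum_const, Set.toFinset_card, ← Nat.card_eq_fintype_card,
    hk, nsmul_eq_mul, Nat.cast_pow, hpR, zero_pow hk0, zero_mul]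

theorem MulAction.sum_eq_sum_fixedBy_of_pow_eq_one {p n : ℕ} [Fact p.Prime] {H α R : Type*}
    [Group H] [MulAction H α] [Fintype α] [DecidableEq α] [CommRing R] (hpR : (p : R) = 0)
    {c : H} (hc : c ^ p ^ n = 1) {F : α → R} (hF : ∀ x, F (c • x) = F x) :
    ∑ x, F x = ∑ x with c • x = x, F x := by
  have hH : IsPGroup p (Subgroup.zpowers c) := IsPGroup.of_card_dvd_pow (n := n) <| by
    rw [Nat.card_zpowers]
    exact orderOf_dvd_of_pow_eq_one hc
  have hFz : ∀ (j : ℤ) x, F (c ^ j • x) = F x := by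
    intro j
    induction j using Int.induction_on with
    | zero => simp
    | succ k ih => intro x; rw [zpow_add_one, mul_smul, ih, hF]
    | pred k ih => intro x; rw [← hF, smul_smul, ← zpow_one_add, add_sub_cancel, ih]
  rw [hH.sum_eq_sum_fixedPoints hpR fun ⟨_, j, hj⟩ x => hj ▸ hFz j x]
  refine sum_congr (filter_congr fun x _ => ⟨fun hx => hx ⟨c, Subgroup.mem_zpowers c⟩, ?_⟩)
    fun _ _ => rfl
  rintro hx ⟨_, j, rfl⟩
  exact mem_fixedBy_zpow hx j

theorem isConj_prod_ofFn_comp_finRotate {G : Type*} [Group G] {n : ℕ} (g : Fin n → G) :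
    IsConj (List.ofFn (g ∘ finRotate n)).prod (List.ofFn g).prod := by
  cases n with
  | zero => simp
  | succ n =>
    obtain ⟨a, v, rfl⟩ : ∃ a v, g = Fin.cons a v :=
      ⟨g 0, Fin.tail g, (Fin.cons_self_tail g).symm⟩
    rw [Function.comp_def, ← Fin.snoc_eq_cons_rotate, List.ofFn_succ', List.ofFn_succ]
    simp only [Fin.snoc_castSucc, Fin.snoc_last, Fin.cons_zero, Fin.cons_succ, List.prod_concat,
      List.prod_cons]
    exact isConj_iff.2 ⟨a, by group⟩

open Fin.NatCast in
theorem eq_const_of_comp_finRotate_eq {α : Type*} {n : ℕ} [NeZero n] {g : Fin n → α}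
    (hg : g ∘ finRotate n = g) (i : Fin n) : g i = g 0 := by
  have hnat : ∀ k : ℕ, g k = g 0 := by
    intro k
    induction k with
    | zero => simp
    | succ k ih => rw [Nat.cast_succ, ← finRotate_apply, ← ih]; exact congrFun hg k
  simpa using hnat i

open Fin.NatCast in
theorem finRotate_pow_self (n : ℕ) [NeZero n] : finRotate n ^ n = 1 := by
  have (k : ℕ) (i : Fin n) : (finRotate n ^ k) i = i + k := by
    induction k with
    | zero => simp
    | succ k ih =>
      rw [pow_succ', Equiv.Perm.mul_apply, ih, finRotate_apply, Nat.cast_succ, add_assoc]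
  ext i
  simp [this]

theorem pow_card_pow_of_card_eq_prime {R : Type*} [Ring R] [Fintype R] {p : ℕ} (hp : p.Prime)
    (hR : Fintype.card R = p) (n : ℕ) (r : R) : r ^ p ^ n = r := by
  have : Fact p.Prime := ⟨hp⟩
  obtain ⟨z, rfl⟩ := (ZMod.ringEquivOfPrime R hp hR).surjective r
  rw [← map_pow, ZMod.pow_card_pow]

namespace MonoidAlgebra

theorem univ_sum_single_coeff {R G : Type*} [Semiring R] [Fintype G] (v : MonoidAlgebra R G) :
    ∑ a, single a (v.coeff a) = v := by
  ext x
  simp [coeff_sum]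

section Semiring

variable {R G : Type*} [CommSemiring R] [Monoid G] [Fintype G]

theorem pow_eq_sum_single (v : MonoidAlgebra R G) (n : ℕ) :
    v ^ n = ∑ g : Fin n → G, single (List.ofFn g).prod (∏ i, v.coeff (g i)) := by
  induction n with
  | zero => simp [one_def]
  | succ n ih =>
    rw [pow_succ', ih, ← (Fin.consEquiv fun _ => G).sum_comp, Fintype.sum_prod_type]
    conv_lhs => rw [← univ_sum_single_coeff v]
    rw [sum_mul_sum]
    simp [single_mul_single, Fin.prod_univ_succ]

theorem sum_coeff_pow (v : MonoidAlgebra R G) (n : ℕ) (P : G → Prop) [DecidablePred P] :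
    ∑ x with P x, (v ^ n).coeff x =
      ∑ g : Fin n → G with P (List.ofFn g).prod, ∏ i, v.coeff (g i) := by
  simp only [pow_eq_sum_single, coeff_sum, Finsupp.finsetSum_apply, coeff_single,
    Finsupp.single_apply]
  rw [sum_comm, sum_filter]
  exact sum_congr rfl fun g _ => by simp [sum_ite_eq]

end Semiring

section CharP

variable {R G : Type*} [CommRing R] [Group G] [Fintype G] (p : ℕ) [Fact p.Prime] [CharP R p]

theorem sum_coeff_pow_char (v : MonoidAlgebra R G) {P : G → Prop} [DecidablePred P]
    (hP : ∀ a b, IsConj a b → (P a ↔ P b)) :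
    ∑ x with P x, (v ^ p).coeff x = ∑ x with P (x ^ p), v.coeff x ^ p := by
  set F : (Fin p → G) → R := fun g => if P (List.ofFn g).prod then ∏ i, v.coeff (g i) else 0
  -- `DomMulAct.mk (finRotate p)` acts on tuples as the cyclic shift `g ↦ g ∘ finRotate p`.
  have hF : ∀ g, F (DomMulAct.mk (finRotate p) • g) = F g := fun g =>
    if_congr (hP _ _ (isConj_prod_ofFn_comp_finRotate g))
      (Equiv.prod_comp (finRotate p) fun i => v.coeff (g i)) rfl
  have hrot : DomMulAct.mk (finRotate p) ^ p ^ 1 = 1 := by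
    rw [pow_one, ← DomMulAct.mk_pow, finRotate_pow_self, DomMulAct.mk_one]
  have hconst (g : Fin p → G) (hg : DomMulAct.mk (finRotate p) • g = g) : (fun _ => g 0) = g :=
    funext fun i => (eq_const_of_comp_finRotate_eq hg i).symm
  rw [sum_coeff_pow, sum_filter]
  change ∑ g, F g = _
  calc _ = ∑ g with DomMulAct.mk (finRotate p) • g = g, F g :=
        sum_eq_sum_fixedBy_of_pow_eq_one (CharP.cast_eq_zero R p) hrot hF
    _ = ∑ a : G, F fun _ => a :=
        sum_nbij' (fun g => g 0) (fun a _ => a) (fun _ _ => mem_univ _)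
          (fun a _ => mem_filter.2 ⟨mem_univ _, rfl⟩) (fun g hg => hconst g (mem_filter.1 hg).2)
          (fun _ _ => rfl) (fun g hg => congrArg F (hconst g (mem_filter.1 hg).2).symm)
    _ = _ := by simp [F, sum_filter, List.ofFn_const, List.prod_replicate, prod_const]

theorem sum_coeff_pow_char_pow (v : MonoidAlgebra R G) (j : ℕ) {P : G → Prop} [DecidablePred P]
    (hP : ∀ a b, IsConj a b → (P a ↔ P b)) :
    ∑ x with P x, (v ^ p ^ j).coeff x = ∑ x with P (x ^ p ^ j), v.coeff x ^ p ^ j := by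
  induction j generalizing P with
  | zero => simp
  | succ j ih =>
    simp only [pow_succ p j, pow_mul]
    rw [sum_coeff_pow_char p _ hP, ← sum_pow_char, ih fun a b h => hP _ _ (h.pow p), sum_pow_char]

end CharP

theorem sum_coeff_isConj_pow_sub_mem {O G : Type*} [CommRing O] [Group G]
    [Fintype G] {p : ℕ} (hp : p.Prime) (I : Ideal O) (hI : Nat.card (O ⧸ I) = p)
    (u : MonoidAlgebra O G) (j : ℕ) (s : G) :
    (∑ x with IsConj (x ^ p ^ j) s, u.coeff x) -
      (∑ x with IsConj s x, (u ^ p ^ j).coeff x) ∈ I := by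
  have : Fact p.Prime := ⟨hp⟩
  have : Fintype (O ⧸ I) :=
    have := Nat.finite_of_card_ne_zero (hI ▸ hp.ne_zero)
    Fintype.ofFinite _
  rw [Nat.card_eq_fintype_card] at hI
  have : CharP (O ⧸ I) p := charP_of_card_eq_prime hI
  have key := sum_coeff_pow_char_pow p (mapRingHom G (Ideal.Quotient.mk I) u) j
    (P := (IsConj s ·)) fun a b h => ⟨fun h' => h'.trans h, fun h' => h'.trans h.symm⟩
  simp only [coeff_mapRingHom, ← map_pow, pow_card_pow_of_card_eq_prime hp hI] at key
  rw [← Ideal.Quotient.eq, map_sum, map_sum, key]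
  exact sum_congr (filter_congr fun x _ => isConj_comm) fun _ _ => rfl

end MonoidAlgebra

theorem wagner_test_general {K : Type*} [Field K] [NumberField K]
    {G : Type*} [Group G] [Fintype G]
    (p : ℕ) (hp : p.Prime)
    (hram : ∀ P : Ideal (NumberField.RingOfIntegers K), P.IsPrime → P ≠ ⊥ →
      (p : NumberField.RingOfIntegers K) ∈ P →
      Nat.card (NumberField.RingOfIntegers K ⧸ P) = p)
    (u : MonoidAlgebra (NumberField.RingOfIntegers K) G)
    (j : ℕ)
    (𝔭 : Ideal (NumberField.RingOfIntegers K)) (h𝔭 : 𝔭.IsPrime)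
    (hp𝔭 : (p : NumberField.RingOfIntegers K) ∈ 𝔭) (s : G) :
    (∑ x ∈ Finset.univ.filter (fun x : G => IsConj (x ^ p ^ j) s), u.coeff x)
      - (∑ x ∈ Finset.univ.filter (fun x : G => IsConj s x), (u ^ p ^ j).coeff x) ∈ 𝔭 := by
  have h𝔭ne : 𝔭 ≠ ⊥ := fun h => hp.ne_zero (by simpa [h] using hp𝔭)
  exact MonoidAlgebra.sum_coeff_isConj_pow_sub_mem hp 𝔭 (hram 𝔭 h𝔭 h𝔭ne hp𝔭) u j s

/-- Proposition 5.6 ("Wagner test"): let `G` be a finite group, `p` a prime and `O`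
the ring of integers of a number field in which `p` is totally ramified. If
`u` is a normalized torsion unit of `OG` of order `p^j·m` with `m ≠ 1` (`m` the
`p'`-part of the order), and `𝔭` is a prime ideal of `O` containing `p·O`, then for
every `s ∈ G` the sum of the partial augmentations `ε_x(u)` over the conjugacy
classes `x^G` with `x^{p^j}` conjugate to `s` is congruent to `ε_s(u^{p^j})`
modulo `𝔭`. -/
theorem wagner_test {K : Type*} [Field K] [NumberField K]
    {G : Type*} [Group G] [Fintype G]
    (p : ℕ) (hp : p.Prime)
    (hram : ∀ P : Ideal (NumberField.RingOfIntegers K), P.IsPrime → P ≠ ⊥ →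
      (p : NumberField.RingOfIntegers K) ∈ P →
      Nat.card (NumberField.RingOfIntegers K ⧸ P) = p)
    (u : MonoidAlgebra (NumberField.RingOfIntegers K) G) (hu : IsUnit u)
    (haug : ∑ g : G, u.coeff g = 1)
    (j m : ℕ) (hm : m ≠ 1) (hpm : ¬ p ∣ m) (hord : orderOf u = p ^ j * m)
    (𝔭 : Ideal (NumberField.RingOfIntegers K)) (h𝔭 : 𝔭.IsPrime)
    (hp𝔭 : (p : NumberField.RingOfIntegers K) ∈ 𝔭) (s : G) :
    (∑ x ∈ Finset.univ.filter (fun x : G => IsConj (x ^ p ^ j) s), u.coeff x)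
      - (∑ x ∈ Finset.univ.filter (fun x : G => IsConj s x), (u ^ p ^ j).coeff x) ∈ 𝔭 :=
  wagner_test_general p hp hram u j 𝔭 h𝔭 hp𝔭 s
end

section
/- Let G be a finite group in which every non-identity element has prime order, and suppose G is solvable and not a p-group of exponent p for any prime p. Then G is a Frobenius group whose order is p^a·q for two distinct primes p, q. -/
/-!
Solvability provides a nontrivial abelian normal subgroup `A`. In a group whose non-identity
elements have prime order, commuting non-identity elements have the same order, so `A` has
prime exponent `s`. Every `g ≠ 1` acts on `A` by conjugation with vanishing norm
`N_g = ∏_{i < ord g} g^i`: if `ord g = s` because `N_g a = (a g)^s`, which is trivial as `a g`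
has order dividing `s²`; otherwise because `g` fixes no non-identity element of `A`, so every
element of `A` has the form `(g • b) / b`.

If `y` normalizes `X = ⟨x⟩` without lying in it, then every `v y` with `v ∈ X` has the order
`w` of `y`, and expanding `∏_{v ∈ X} ∏_{m < w} (v y)^m • a` in two ways gives
`a ^ |X| = N_x a = 1`; taking `a` of order `s` forces `ord x = s`. Hence for every prime
`r ≠ s` the subgroups of order `r` are self-normalizing, so malnormal. A subgroup of order `r²`
would be abelian and normalize each of its subgroups of order `r`, so `r² ∤ |G|`. The conjugates
of a malnormal subgroup of order `r` contain at least `|G| (r - 1) / r ≥ |G| / 2` non-identity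
elements, all of order `r`, so there is only one such prime `r`: `|G| = s^e r`, and any subgroup
of order `r` is a Frobenius complement.
-/

open Finset Subgroup
open scoped IsMulCommutative

section Group

variable {G : Type*} [Group G]

theorem pow_injOn_orderOf_eq {w m : ℕ} (hw : 1 < w) (hm : m.Coprime w) :
    Set.InjOn (fun g : G ↦ g ^ m) {g | orderOf g = w} := by
  obtain ⟨c, -, hc⟩ := Nat.exists_mul_mod_eq_one_of_coprime hm hw
  have hinv : ∀ g : G, orderOf g = w → (g ^ m) ^ c = g := fun g hg ↦ by
    rw [← pow_mul, ← pow_mod_orderOf, hg, hc, pow_one]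
  intro g hg g' hg' h
  rw [← hinv g hg, ← hinv g' hg']
  exact congrArg (· ^ c) h

theorem mul_pow_mul_inv_pow_mem {X : Subgroup G} {y v : G} (hy : y ∈ normalizer (X : Set G))
    (hv : v ∈ X) (m : ℕ) : (v * y) ^ m * (y ^ m)⁻¹ ∈ X := by
  induction m with
  | zero => simp
  | succ m ih =>
    have hconj : y ^ m * v * (y ^ m)⁻¹ ∈ X := (mem_normalizer_iff.mp (pow_mem hy m) v).mp hv
    convert mul_mem ih hconj using 1
    rw [pow_succ, pow_succ]
    group

theorem orderOf_eq_of_mem_zpowers_of_prime {x z : G} (hx : (orderOf x).Prime)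
    (hz : z ∈ zpowers x) (hz1 : z ≠ 1) : orderOf z = orderOf x :=
  (hx.eq_one_or_self_of_dvd _ (orderOf_dvd_of_mem_zpowers hz)).resolve_left
    fun h ↦ hz1 (orderOf_eq_one_iff.mp h)

theorem zpowers_eq_of_mem_of_prime [Finite G] {x z : G} (hx : (orderOf x).Prime)
    (hz : z ∈ zpowers x) (hz1 : z ≠ 1) : zpowers z = zpowers x :=
  eq_of_le_of_card_ge (zpowers_le.mpr hz) <| by
    rw [Nat.card_zpowers, Nat.card_zpowers, orderOf_eq_of_mem_zpowers_of_prime hx hz hz1]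

end Group

section CyclicNorm

variable {G M : Type*} [Group G] [CommGroup M] [MulDistribMulAction G M]

noncomputable def cyclicNorm (g : G) : M →* M :=
  ∏ i ∈ range (orderOf g), MulDistribMulAction.toMonoidHom M (g ^ i)

theorem cyclicNorm_apply (g : G) (a : M) :
    cyclicNorm g a = ∏ i ∈ range (orderOf g), g ^ i • a := by
  simp [cyclicNorm]

theorem cyclicNorm_smul (g : G) (a : M) : cyclicNorm g (g • a) = cyclicNorm g a := by
  have h := prod_range_succ' (fun i ↦ g ^ i • a) (orderOf g)
  rw [prod_range_succ, pow_orderOf_eq_one, pow_zero, mul_left_inj] at h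
  simp only [cyclicNorm_apply, smul_smul, ← pow_succ, h]

theorem prod_zpowers_smul [Finite G] (g : G) [Fintype (zpowers g)] (a : M) :
    ∏ v : zpowers g, (v : G) • a = cyclicNorm g a := by
  rw [cyclicNorm_apply, ← Fin.prod_univ_eq_prod_range,
    ← (finEquivZPowers (isOfFinOrder_of_finite g)).prod_comp]
  rfl

/-- Both `∏_{v ∈ X} N_{v y} a` and `∏_{v ∈ X} v • N_y a` are `1`. Written as products over
`m < ord y` of `∏_v (v y)^m • a`, resp. `∏_v (v y^m) • a`, their factors agree for `m ≠ 0`,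
because `v ↦ (v y)^m y^{-m}` permutes `X`; what remains are the factors at `m = 0`. -/
theorem pow_card_eq_prod_smul {X : Subgroup G} [Fintype X] {y : G}
    (hy : y ∈ normalizer (X : Set G)) (hyp : (orderOf y).Prime)
    (hXy : ∀ v ∈ X, orderOf (v * y) = orderOf y)
    (hN : ∀ g : G, g ≠ 1 → cyclicNorm (M := M) g = 1) (a : M) :
    a ^ Nat.card X = ∏ v : X, (v : G) • a := by
  have hne : ∀ g : G, orderOf g = orderOf y → g ≠ 1 := fun g hg h1 ↦ by
    rw [h1, orderOf_one] at hg
    exact hyp.ne_one hg.symm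
  have hP : ∏ m ∈ range (orderOf y), ∏ v : X, ((v : G) * y) ^ m • a = 1 := by
    rw [prod_comm]
    refine prod_eq_one fun v _ ↦ ?_
    rw [← hXy v v.2, ← cyclicNorm_apply, hN _ (hne _ (hXy v v.2))]
    rfl
  have hQ : ∏ m ∈ range (orderOf y), ∏ v : X, ((v : G) * y ^ m) • a = 1 := by
    rw [prod_comm]
    refine prod_eq_one fun v _ ↦ ?_
    simp_rw [mul_smul, ← Finset.smul_prod', ← cyclicNorm_apply, hN y (hne y rfl)]
    exact smul_one _
  have hPQ : ∀ m ∈ (range (orderOf y)).erase 0,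
      ∏ v : X, ((v : G) * y) ^ m • a = ∏ v : X, ((v : G) * y ^ m) • a := by
    intro m hm
    obtain ⟨hm0, hmy⟩ := mem_erase.mp hm
    have hcop : m.Coprime (orderOf y) := Nat.coprime_comm.mp <| hyp.coprime_iff_not_dvd.mpr
      fun h ↦ (Nat.le_of_dvd (Nat.pos_of_ne_zero hm0) h).not_gt (mem_range.mp hmy)
    let e : X → X := fun v ↦ ⟨((v : G) * y) ^ m * (y ^ m)⁻¹, mul_pow_mul_inv_pow_mem hy v.2 m⟩
    have he : Function.Injective e := fun v v' h ↦ by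
      have h' : ((v : G) * y) ^ m = ((v' : G) * y) ^ m :=
        mul_right_cancel (congrArg Subtype.val h)
      exact Subtype.ext (mul_right_cancel
        (pow_injOn_orderOf_eq hyp.one_lt hcop (hXy v v.2) (hXy v' v'.2) h'))
    exact Fintype.prod_bijective e (Finite.injective_iff_bijective.mp he) _ _
      fun v ↦ by simp [e]
  have h0 : 0 ∈ range (orderOf y) := mem_range.mpr hyp.pos
  rw [← mul_prod_erase _ _ h0, prod_congr rfl hPQ, ← hQ, ← mul_prod_erase _ _ h0,
    mul_left_inj] at hP
  simpa [Nat.card_eq_fintype_card] using hP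

end CyclicNorm

/-- EPO-groups ("elements of prime order"). -/
def IsEPOGroup (G : Type*) [Group G] : Prop :=
  ∀ g : G, g ≠ 1 → (orderOf g).Prime

namespace IsEPOGroup

variable {G : Type*} [Group G]

theorem orderOf_eq_of_commute (hG : IsEPOGroup G) {a b : G} (ha : a ≠ 1) (hb : b ≠ 1)
    (h : Commute a b) : orderOf a = orderOf b := by
  by_contra hne
  have hab : a * b ≠ 1 := fun h1 ↦ hne (by rw [eq_inv_of_mul_eq_one_left h1, orderOf_inv])
  have hmul := h.orderOf_mul_eq_mul_orderOf_of_coprime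
    ((Nat.coprime_primes (hG a ha) (hG b hb)).mpr hne)
  exact Nat.not_prime_mul (hG a ha).ne_one (hG b hb).ne_one (hmul ▸ hG _ hab)

theorem pow_eq_one_of_pow_pow_eq_one (hG : IsEPOGroup G) {p : ℕ} (hp : p.Prime) {g : G}
    (h : (g ^ p) ^ p = 1) : g ^ p = 1 := by
  rcases eq_or_ne g 1 with rfl | hg
  · exact one_pow p
  have hdvd : orderOf g ∣ p ^ 2 := orderOf_dvd_of_pow_eq_one (by rwa [sq, pow_mul])
  rw [← (Nat.prime_dvd_prime_iff_eq (hG g hg) hp).mp ((hG g hg).dvd_of_dvd_pow hdvd)]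
  exact pow_orderOf_eq_one g

theorem orderOf_mul_eq_of_mem_normalizer (hG : IsEPOGroup G) [Finite G] {X : Subgroup G}
    {y v : G} (hy : y ∈ normalizer (X : Set G)) (hyX : y ∉ X) (hv : v ∈ X) :
    orderOf (v * y) = orderOf y := by
  have hvyX : v * y ∉ X := fun h ↦ hyX (by simpa using mul_mem (inv_mem hv) h)
  have hy1 : y ≠ 1 := fun h ↦ hyX (h ▸ one_mem X)
  have hvy1 : v * y ≠ 1 := fun h ↦ hvyX (h ▸ one_mem X)
  have hpow : (v * y) ^ orderOf y = 1 := by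
    by_contra h1
    have hmem := mul_pow_mul_inv_pow_mem hy hv (orderOf y)
    rw [pow_orderOf_eq_one, inv_one, mul_one] at hmem
    have hgen := zpowers_eq_of_mem_of_prime (hG _ hvy1) (pow_mem (mem_zpowers _) _) h1
    exact hvyX (zpowers_le.mp (hgen ▸ zpowers_le.mpr hmem))
  exact (Nat.prime_dvd_prime_iff_eq (hG _ hvy1) (hG y hy1)).mp (orderOf_dvd_of_pow_eq_one hpow)

theorem exponent_eq [Nontrivial G] (hG : IsEPOGroup G) {p k : ℕ} (hp : p.Prime)
    (hcard : Nat.card G = p ^ k) : Monoid.exponent G = p :=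
  (Monoid.exponent_eq_prime_iff hp).mpr fun g hg ↦ (Nat.prime_dvd_prime_iff_eq (hG g hg) hp).mp
    ((hG g hg).dvd_of_dvd_pow (hcard ▸ orderOf_dvd_natCard g))

end IsEPOGroup

section ConjAction

variable {G : Type*} [Group G] (A : Subgroup G) [A.Normal]

instance Subgroup.conjMulDistribMulAction : MulDistribMulAction G A :=
  MulDistribMulAction.compHom A (MulAut.conjNormal (H := A))

theorem Subgroup.coe_conj_smul (g : G) (a : A) : ((g • a : A) : G) = g * a * g⁻¹ :=
  MulAut.conjNormal_apply g a

theorem mul_pow_eq_prod_smul_mul [IsMulCommutative A] (a : A) (g : G) (n : ℕ) :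
    ((a : G) * g) ^ n = ((∏ i ∈ range n, g ^ i • a : A) : G) * g ^ n := by
  induction n with
  | zero => simp
  | succ n ih =>
    rw [pow_succ, ih, prod_range_succ, Subgroup.coe_mul, coe_conj_smul, pow_succ]
    group

theorem IsEPOGroup.cyclicNorm_eq_one [Finite G] (hG : IsEPOGroup G) [IsMulCommutative A]
    {s : ℕ} (hs : s.Prime) (hA : ∀ a ∈ A, a ^ s = 1) {g : G} (hg : g ≠ 1) :
    cyclicNorm (M := A) g = 1 := by
  refine MonoidHom.ext fun a ↦ ?_
  rw [MonoidHom.one_apply]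
  by_cases hgs : orderOf g = s
  · have h := mul_pow_eq_prod_smul_mul A a g (orderOf g)
    rw [pow_orderOf_eq_one, mul_one, ← cyclicNorm_apply, hgs] at h
    have h1 : ((a : G) * g) ^ s = 1 :=
      hG.pow_eq_one_of_pow_pow_eq_one hs (h ▸ hA _ (cyclicNorm g a).2)
    exact Subtype.ext (h.symm.trans h1)
  · have hfix : ∀ b : A, g • b = b → b = 1 := fun b hb ↦ by
      by_contra hb1
      have hb1' : (b : G) ≠ 1 := fun h ↦ hb1 (Subtype.ext h)
      have hcomm : Commute g b := by
        have := congrArg Subtype.val hb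
        rwa [coe_conj_smul, mul_inv_eq_iff_eq_mul] at this
      have : Fact s.Prime := ⟨hs⟩
      exact hgs ((hG.orderOf_eq_of_commute hg hb1' hcomm).trans
        (orderOf_eq_prime (hA b b.2) hb1'))
    let φ : A →* A := MulDistribMulAction.toMonoidHom A g / MonoidHom.id A
    have hφ : Function.Injective φ :=
      (injective_iff_map_eq_one φ).mpr fun b hb ↦ hfix b (div_eq_one.mp hb)
    obtain ⟨b, rfl⟩ := Finite.injective_iff_surjective.mp hφ a
    simp [φ, cyclicNorm_smul]

end ConjAction

theorem exists_normal_isMulCommutative_ne_bot (G : Type*) [Group G] [Nontrivial G]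
    [Group.IsSolvable G] : ∃ A : Subgroup G, A.Normal ∧ IsMulCommutative A ∧ A ≠ ⊥ := by
  classical
  have hP : ∃ n, derivedSeries G n = ⊥ := Group.IsSolvable.solvable
  obtain ⟨k, hk⟩ := Nat.exists_eq_add_one_of_ne_zero fun h0 ↦
    top_ne_bot (α := Subgroup G) (derivedSeries_zero G ▸ h0 ▸ Nat.find_spec hP)
  refine ⟨derivedSeries G k, derivedSeries_normal G k, ?_, Nat.find_min hP (by omega)⟩
  rw [← commutator_self_eq_bot_iff, ← derivedSeries_succ, ← hk]
  exact Nat.find_spec hP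

namespace IsEPOGroup

variable {G : Type*} [Group G]

theorem exists_normal_pow_prime_eq_one [Nontrivial G] [Group.IsSolvable G]
    (hG : IsEPOGroup G) : ∃ A : Subgroup G, A.Normal ∧ IsMulCommutative A ∧
      ∃ s : ℕ, s.Prime ∧ (∀ a ∈ A, a ^ s = 1) ∧ ∃ a₀ ∈ A, orderOf a₀ = s := by
  obtain ⟨A, hAn, hAc, hA⟩ := exists_normal_isMulCommutative_ne_bot G
  obtain ⟨⟨a₀, ha₀A⟩, ha₀⟩ := ne_bot_iff_exists_ne_one.mp hA
  have ha₀ : a₀ ≠ 1 := fun h ↦ ha₀ (Subtype.ext h)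
  refine ⟨A, hAn, hAc, orderOf a₀, hG a₀ ha₀, fun b hb ↦ ?_, a₀, ha₀A, rfl⟩
  rcases eq_or_ne b 1 with rfl | hb1
  · exact one_pow _
  rw [hG.orderOf_eq_of_commute ha₀ hb1 (setLike_mul_comm ha₀A hb)]
  exact pow_orderOf_eq_one b

theorem normalizer_zpowers_eq [Finite G] (hG : IsEPOGroup G) (A : Subgroup G) [A.Normal]
    [IsMulCommutative A] {s : ℕ} (hs : s.Prime) (hA : ∀ a ∈ A, a ^ s = 1) {a₀ : G}
    (ha₀A : a₀ ∈ A) (ha₀ : orderOf a₀ = s) {x : G} (hx : x ≠ 1) (hxs : orderOf x ≠ s) :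
    normalizer (zpowers x : Set G) = zpowers x := by
  let _ : Fintype (zpowers x) := .ofFinite _
  refine le_antisymm (fun y hy ↦ ?_) le_normalizer
  by_contra hyX
  have hy1 : y ≠ 1 := fun h ↦ hyX (h ▸ one_mem _)
  have key := pow_card_eq_prod_smul (M := A) hy (hG y hy1)
    (fun v hv ↦ hG.orderOf_mul_eq_of_mem_normalizer hy hyX hv)
    (fun g hg ↦ hG.cyclicNorm_eq_one A hs hA hg) ⟨a₀, ha₀A⟩
  rw [prod_zpowers_smul, hG.cyclicNorm_eq_one A hs hA hx, MonoidHom.one_apply,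
    Nat.card_zpowers] at key
  have hdvd : s ∣ orderOf x := by
    rw [← ha₀]
    exact orderOf_dvd_of_pow_eq_one (by simpa using congrArg Subtype.val key)
  exact hxs ((Nat.prime_dvd_prime_iff_eq hs (hG x hx)).mp hdvd).symm

end IsEPOGroup

section Malnormal

variable {G : Type*} [Group G]

def Subgroup.IsMalnormal (H : Subgroup G) : Prop :=
  ∀ g : G, g ∉ H → H ⊓ H.map (MulAut.conj g).toMonoidHom = ⊥

theorem isMalnormal_zpowers [Finite G] {x : G} (hx : (orderOf x).Prime)
    (hN : normalizer (zpowers x : Set G) = zpowers x) : (zpowers x).IsMalnormal := by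
  intro g hg
  refine (eq_bot_iff_forall _).mpr fun z hz ↦ ?_
  by_contra hz1
  obtain ⟨hzx, hzg⟩ := mem_inf.mp hz
  rw [MonoidHom.map_zpowers] at hzg
  have hgx : (orderOf ((MulAut.conj g).toMonoidHom x)).Prime := by
    rwa [orderOf_injective _ (MulAut.conj g).injective]
  have hmap : (zpowers x).map (MulAut.conj g).toMonoidHom = zpowers x := by
    rw [MonoidHom.map_zpowers, ← zpowers_eq_of_mem_of_prime hgx hzg hz1,
      zpowers_eq_of_mem_of_prime hx hzx hz1]
  exact hg (hN ▸ mem_normalizer_iff_map_conj_eq.mpr hmap)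

/-- Each conjugate `g h g⁻¹` with `h ∈ H \ {1}` arises from at most `|H|` pairs `(g, h)`:
two pairs `(g, h)` and `(g', h')` with the same conjugate have `g⁻¹ g' ∈ H` by malnormality. -/
theorem Subgroup.IsMalnormal.card_mul_card_sub_one_le [Fintype G] {H : Subgroup G}
    (hH : H.IsMalnormal) {T : Finset G} (hT : ∀ g : G, ∀ h ∈ H, h ≠ 1 → g * h * g⁻¹ ∈ T) :
    Fintype.card G * (Nat.card H - 1) ≤ Nat.card H * #T := by
  classical
  let S : Finset (G × G) := univ ×ˢ ((H : Set G).toFinset.erase 1)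
  have hS : #S = Fintype.card G * (Nat.card H - 1) := by simp [S, card_erase_of_mem]
  rw [← hS]
  refine card_le_mul_card_image_of_maps_to (f := fun p ↦ p.1 * p.2 * p.1⁻¹)
    (fun p hp ↦ ?_) _ fun t _ ↦ ?_
  · simp only [S, mem_product, mem_erase, Set.mem_toFinset, SetLike.mem_coe] at hp
    exact hT _ _ hp.2.2 hp.2.1
  rcases (S.filter fun p ↦ p.1 * p.2 * p.1⁻¹ = t).eq_empty_or_nonempty with h | ⟨p₀, hp₀⟩
  · simp [h]
  obtain ⟨hp₀S, hp₀t⟩ := mem_filter.mp hp₀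
  simp only [S, mem_product, mem_erase, Set.mem_toFinset, SetLike.mem_coe] at hp₀S
  calc #(S.filter fun p ↦ p.1 * p.2 * p.1⁻¹ = t)
      ≤ #(H : Set G).toFinset := card_le_card_of_injOn (fun p ↦ p₀.1⁻¹ * p.1)
        (fun p hp ↦ ?_) fun p hp p' hp' h ↦ ?_
    _ = Nat.card H := by simp
  · rw [mem_coe, mem_filter] at hp
    obtain ⟨hpS, hpt⟩ := hp
    rw [← hp₀t] at hpt
    simp only [S, mem_product, mem_erase, Set.mem_toFinset, SetLike.mem_coe] at hpS
    rw [mem_coe, Set.mem_toFinset, SetLike.mem_coe]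
    by_contra hk
    have hconj : p₀.2 = (p₀.1⁻¹ * p.1) * p.2 * (p₀.1⁻¹ * p.1)⁻¹ :=
      calc p₀.2 = p₀.1⁻¹ * (p₀.1 * p₀.2 * p₀.1⁻¹) * p₀.1 := by group
        _ = _ := by rw [← hpt]; group
    have hmem : p₀.2 ∈ H ⊓ H.map (MulAut.conj (p₀.1⁻¹ * p.1)).toMonoidHom :=
      mem_inf.mpr ⟨hp₀S.2.2, hconj ▸ ⟨p.2, hpS.2.2, rfl⟩⟩
    rw [hH _ hk, mem_bot] at hmem
    exact hp₀S.2.1 hmem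
  · obtain ⟨-, hpt⟩ := mem_filter.mp (mem_coe.mp hp)
    obtain ⟨-, hpt'⟩ := mem_filter.mp (mem_coe.mp hp')
    have h1 : p.1 = p'.1 := mul_left_cancel h
    refine Prod.ext h1 ?_
    rw [← hpt', h1] at hpt
    simpa using hpt

/-- By `card_mul_card_sub_one_le`, the elements of order `orderOf xᵢ` make up at least half of
`G` for each `i`, and none of them is `1`. -/
theorem orderOf_eq_of_isMalnormal_zpowers [Fintype G] {x₁ x₂ : G}
    (h₁ : (orderOf x₁).Prime) (h₂ : (orderOf x₂).Prime) (hM₁ : (zpowers x₁).IsMalnormal)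
    (hM₂ : (zpowers x₂).IsMalnormal) : orderOf x₁ = orderOf x₂ := by
  classical
  let T : G → Finset G := fun x ↦ univ.filter fun g ↦ orderOf g = orderOf x
  have hcount : ∀ x : G, (orderOf x).Prime → (zpowers x).IsMalnormal →
      Fintype.card G ≤ 2 * #(T x) := fun x hx hM ↦ by
    have h := hM.card_mul_card_sub_one_le (T := T x) fun g h hh hh1 ↦ by
      rw [mem_filter_univ, ← (SemiconjBy.conj_mk g h).orderOf_eq]
      exact orderOf_eq_of_mem_zpowers_of_prime hx hh hh1
    obtain ⟨k, hk⟩ := Nat.exists_eq_add_of_le hx.two_le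
    rw [Nat.card_zpowers, hk, show 2 + k - 1 = k + 1 by omega] at h
    nlinarith
  by_contra hne
  have hdisj : Disjoint (T x₁) (T x₂) := disjoint_filter.mpr fun g _ h h' ↦ hne (h.symm.trans h')
  have hsub : T x₁ ∪ T x₂ ⊆ univ.erase 1 := fun g hg ↦ by
    refine mem_erase.mpr ⟨fun h1 ↦ ?_, mem_univ g⟩
    rcases mem_union.mp hg with hg | hg <;> rw [mem_filter_univ, h1, orderOf_one] at hg
    exacts [h₁.ne_one hg.symm, h₂.ne_one hg.symm]
  have := card_le_card hsub
  rw [card_union_of_disjoint hdisj, card_erase_of_mem (mem_univ 1), card_univ] at this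
  have := hcount x₁ h₁ hM₁
  have := hcount x₂ h₂ hM₂
  have := Fintype.card_pos (α := G)
  omega

end Malnormal

theorem not_sq_dvd_card_of_normalizer_zpowers_eq {G : Type*} [Group G] [Finite G] {r : ℕ}
    (hr : r.Prime) (h : ∀ x : G, orderOf x = r → normalizer (zpowers x : Set G) = zpowers x) :
    ¬ r ^ 2 ∣ Nat.card G := by
  intro hdvd
  have : Fact r.Prime := ⟨hr⟩
  obtain ⟨P, hP⟩ := Sylow.exists_subgroup_card_pow_prime r hdvd
  obtain ⟨x, hx⟩ := exists_prime_orderOf_dvd_card' (G := P) r (hP ▸ dvd_pow_self r two_ne_zero)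
  obtain ⟨y, hyP, hyx⟩ : ∃ y ∈ P, y ∉ zpowers (x : G) := by
    by_contra! hle
    have := Nat.le_of_dvd Nat.card_pos (card_dvd_of_le hle)
    rw [hP, Nat.card_zpowers, orderOf_coe, hx, sq] at this
    exact (Nat.lt_mul_self_iff.mpr hr.one_lt).not_ge this
  refine hyx (h x (by rw [orderOf_coe, hx]) ▸ centralizer_le_normalizer _ ?_)
  have := IsPGroup.isMulCommutative_of_card_eq_prime_sq hP
  rw [mem_centralizer_iff]
  rintro _ ⟨k, rfl⟩
  exact Commute.zpow_left (congrArg Subtype.val (mul_comm' x ⟨y, hyP⟩)) k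

theorem Nat.exists_eq_pow_mul_prime {n s : ℕ} (hn : n ≠ 0) (hs : s.Prime)
    (hpow : ∀ k, n ≠ s ^ k) (hsq : ∀ r, r.Prime → r ≠ s → ¬ r ^ 2 ∣ n)
    (huniq : ∀ r₁ r₂, r₁.Prime → r₂.Prime → r₁ ≠ s → r₂ ≠ s → r₁ ∣ n → r₂ ∣ n → r₁ = r₂) :
    ∃ e r, r.Prime ∧ r ≠ s ∧ n = s ^ e * r := by
  obtain ⟨e, m, hsm, rfl⟩ := Nat.exists_eq_pow_mul_and_not_dvd hn s hs.ne_one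
  have hm1 : m ≠ 1 := fun h ↦ hpow e (by rw [h, mul_one])
  have hr := Nat.minFac_prime hm1
  have hrs : m.minFac ≠ s := fun h ↦ hsm (h ▸ Nat.minFac_dvd m)
  obtain ⟨m', hm'⟩ := Nat.minFac_dvd m
  refine ⟨e, m.minFac, hr, hrs, ?_⟩
  suffices m' = 1 by rw [this, mul_one] at hm'; rw [← hm']
  by_contra hm'1
  have hdm : m'.minFac ∣ m := hm' ▸ dvd_mul_of_dvd_right (Nat.minFac_dvd m') _
  have hdr := huniq _ _ (Nat.minFac_prime hm'1) hr (fun h ↦ hsm (h ▸ hdm)) hrs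
    (dvd_mul_of_dvd_right hdm _) (dvd_mul_of_dvd_right (Nat.minFac_dvd m) _)
  refine hsq _ hr hrs (dvd_mul_of_dvd_right ?_ _)
  calc m.minFac ^ 2 = m.minFac * m'.minFac := by rw [sq, hdr]
    _ ∣ m.minFac * m' := mul_dvd_mul_left _ (Nat.minFac_dvd m')
    _ = m := hm'.symm

/-- A finite solvable group all of whose non-identity elements have prime order,
and which is not a `p`-group of exponent `p` for any prime `p`, is a Frobenius
group of order `p^a·q` for distinct primes `p`, `q`. Here a Frobenius group is
witnessed by a proper nontrivial subgroup `H` with `H ∩ H^g = 1` for all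
`g ∉ H`. -/
theorem frobenius_of_elements_of_prime_order {G : Type*} [Group G] [Fintype G]
    [Nontrivial G] (hsol : IsSolvable G)
    (hprime : ∀ g : G, g ≠ 1 → (orderOf g).Prime)
    (hnp : ¬ ∃ p : ℕ, p.Prime ∧ IsPGroup p G ∧ Monoid.exponent G = p) :
    ∃ H : Subgroup G, H ≠ ⊥ ∧ H ≠ ⊤ ∧
      (∀ g : G, g ∉ H → H ⊓ H.map (MulAut.conj g).toMonoidHom = ⊥) ∧
      ∃ p q : ℕ, p.Prime ∧ q.Prime ∧ p ≠ q ∧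
        ∃ a : ℕ, Fintype.card G = p ^ a * q := by
  have hG : IsEPOGroup G := hprime
  have : Group.IsSolvable G := hsol
  obtain ⟨A, hAn, hAc, s, hs, hA, a₀, ha₀A, ha₀⟩ := hG.exists_normal_pow_prime_eq_one
  have hx1 : ∀ {x : G}, (orderOf x).Prime → x ≠ 1 := fun hx h1 ↦
    hx.ne_one (by rw [h1, orderOf_one])
  have hself : ∀ x : G, (orderOf x).Prime → orderOf x ≠ s →
      normalizer (zpowers x : Set G) = zpowers x := fun x hx hxs ↦
    hG.normalizer_zpowers_eq A hs hA ha₀A ha₀ (hx1 hx) hxs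
  have hM : ∀ x : G, (orderOf x).Prime → orderOf x ≠ s → (zpowers x).IsMalnormal :=
    fun x hx hxs ↦ isMalnormal_zpowers hx (hself x hx hxs)
  obtain ⟨e, r, hr, hrs, hcard⟩ := Nat.exists_eq_pow_mul_prime Nat.card_pos.ne' hs
    (fun k hk ↦ hnp ⟨s, hs, IsPGroup.of_card hk, hG.exponent_eq hs hk⟩)
    (fun r hr hrs ↦ not_sq_dvd_card_of_normalizer_zpowers_eq hr fun x hx ↦
      hself x (hx ▸ hr) (hx ▸ hrs))
    fun r₁ r₂ hr₁ hr₂ hrs₁ hrs₂ hd₁ hd₂ ↦ by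
      have : Fact r₁.Prime := ⟨hr₁⟩
      have : Fact r₂.Prime := ⟨hr₂⟩
      obtain ⟨x₁, rfl⟩ := exists_prime_orderOf_dvd_card' r₁ hd₁
      obtain ⟨x₂, rfl⟩ := exists_prime_orderOf_dvd_card' r₂ hd₂
      exact orderOf_eq_of_isMalnormal_zpowers hr₁ hr₂ (hM x₁ hr₁ hrs₁) (hM x₂ hr₂ hrs₂)
  have : Fact r.Prime := ⟨hr⟩
  obtain ⟨x, hx⟩ := exists_prime_orderOf_dvd_card' r (hcard ▸ dvd_mul_left r _)
  refine ⟨zpowers x, zpowers_ne_bot.mpr (hx1 (hx ▸ hr)), fun htop ↦ hrs ?_,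
    hM x (hx ▸ hr) (hx ▸ hrs),
    s, r, hs, hr, hrs.symm, e, by rw [← Nat.card_eq_fintype_card, hcard]⟩
  have hsr : s ∣ r := by
    rw [← hx, ← Nat.card_zpowers, htop, card_top, ← ha₀]
    exact orderOf_dvd_natCard a₀
  exact ((Nat.prime_dvd_prime_iff_eq hs hr).mp hsr).symm
end

section
/- Let G = H × K be a direct product of finite groups. If every normalized torsion unit of ℤG is conjugate in the units of ℚG to an element of G, then every normalized torsion unit of ℤH is conjugate in the units of ℚH to an element of H. -/
/-- The first Zassenhaus conjecture for a finite group `G`: every normalized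
torsion unit of `ℤG` (viewed inside `ℚG` as a unit with integral coefficients
and augmentation `1`) is conjugate in the units of `ℚG` to an element of `G`. -/
def ZC1 (G : Type*) [Group G] [Fintype G] : Prop :=
  ∀ u : (MonoidAlgebra ℚ G)ˣ,
    (∀ g : G, ∃ z : ℤ, (u : MonoidAlgebra ℚ G).coeff g = (z : ℚ)) →
    (∑ g : G, (u : MonoidAlgebra ℚ G).coeff g = 1) →
    (∃ n : ℕ, 0 < n ∧ u ^ n = 1) →
    ∃ (g : G) (v : (MonoidAlgebra ℚ G)ˣ),
      (v : MonoidAlgebra ℚ G) * u * (↑v⁻¹ : MonoidAlgebra ℚ G)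
        = MonoidAlgebra.of ℚ G g

/-!
`H` is a retract of `H × K`: the inclusion `ι` and projection `π` induce ring maps
`ℚH → ℚ(H × K) → ℚH` composing to the identity. Since `ι` preserves integrality of
coefficients, augmentation and torsion, `ι u` is conjugate to some `g` by ZC1 for
`H × K`, and applying `π` to that conjugation conjugates `u` to `π g`.
-/

namespace MonoidAlgebra

variable {R M N : Type*}

theorem exists_int_coeff_mapDomain (f : M → N) {x : MonoidAlgebra ℚ M}
    (hx : ∀ m, ∃ z : ℤ, x.coeff m = z) (n : N) : ∃ z : ℤ, (mapDomain f x).coeff n = z := by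
  -- `x` comes from `ℤM`, and `mapDomain` commutes with changing the coefficient ring.
  obtain ⟨y, rfl⟩ : x ∈ Set.range (map (Int.castAddHom ℚ)) := by
    rw [range_map]
    exact fun m ↦ (hx m).imp fun z hz ↦ hz.symm
  refine ⟨(mapDomain f y).coeff n, ?_⟩
  simp [Finsupp.mapDomain_mapRange]

theorem sum_coeff_mapDomain [Semiring R] [Fintype M] [Fintype N] (f : M → N)
    (x : MonoidAlgebra R M) : ∑ n, (mapDomain f x).coeff n = ∑ m, x.coeff m := by
  classical
  simp only [coeff_mapDomain]
  rw [← Finsupp.sum_fintype _ (fun _ r ↦ r) fun _ ↦ rfl,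
    Finsupp.sum_mapDomain_index (fun _ ↦ rfl) fun _ _ _ ↦ rfl,
    Finsupp.sum_fintype _ _ fun _ ↦ rfl]

theorem mapDomain_mapDomain [Semiring R] (f : M → N) (g : N → M) (x : MonoidAlgebra R M) :
    mapDomain g (mapDomain f x) = mapDomain (g ∘ f) x := by
  ext
  simp [Finsupp.mapDomain_comp]

end MonoidAlgebra

open MonoidAlgebra in
theorem ZC1.of_retract {G H : Type*} [Group G] [Group H] [Fintype G] [Fintype H]
    (ι : H →* G) (π : G →* H) (hπι : π.comp ι = .id H) (h : ZC1 G) : ZC1 H := by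
  intro u hint haug ⟨n, hn, hun⟩
  have hπι' (x : MonoidAlgebra ℚ H) : mapDomain π (mapDomain ι x) = x := by
    rw [mapDomain_mapDomain, ← MonoidHom.coe_comp, hπι]
    ext; simp
  obtain ⟨g, v, hv⟩ := h (Units.map (mapDomainRingHom ℚ ι).toMonoidHom u)
    (exists_int_coeff_mapDomain ι hint) ((sum_coeff_mapDomain ι _).trans haug)
    ⟨n, hn, by rw [← map_pow, hun, map_one]⟩
  refine ⟨π g, Units.map (mapDomainRingHom ℚ π).toMonoidHom v, ?_⟩
  simpa [mapDomain_mul, hπι'] using congrArg (mapDomain π) hv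

/-- Remark 2.4: the first Zassenhaus conjecture is inherited by direct factors:
if it holds for `H × K` then it holds for `H`. -/
theorem zc1_of_directProduct {H K : Type*} [Group H] [Group K]
    [Fintype H] [Fintype K] (h : ZC1 (H × K)) : ZC1 H :=
  h.of_retract (.inl H K) (.fst H K) (MonoidHom.fst_comp_inl ..)
end

section
/- Say a finite group G has a Sylow tower if there is an ascending chain of normal subgroups 1 = G₀ ≤ G₁ ≤ ⋯ ≤ G_r = G where each G_i/G_{i-1} is a Sylow subgroup of G/G_{i-1}. Then every finite supersolvable group has a Sylow tower. -/
/-- A finite group `G` is supersolvable: it has a normal series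
`⊥ = H₀ ≤ H₁ ≤ ⋯ ≤ H_n = ⊤` with each `H_i` normal in `G` and each factor
`H_{i+1}/H_i` cyclic (expressed concretely: some `x ∈ H_{i+1}` generates
`H_{i+1}` modulo `H_i`). -/
def IsSupersolvable (G : Type*) [Group G] : Prop :=
  ∃ n : ℕ, ∃ H : Fin (n + 1) → Subgroup G,
    H 0 = ⊥ ∧ H (Fin.last n) = ⊤ ∧
    (∀ i : Fin n, H i.castSucc ≤ H i.succ) ∧ (∀ i, (H i).Normal) ∧
    ∀ i : Fin n, ∃ x ∈ H i.succ, ∀ y ∈ H i.succ, ∃ k : ℤ,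
      (x ^ k)⁻¹ * y ∈ H i.castSucc

/-- A finite group `G` has a Sylow tower: an ascending chain of normal subgroups
`⊥ = T₀ ≤ T₁ ≤ ⋯ ≤ T_r = ⊤` such that each factor `T_{i+1}/T_i` is a Sylow
`p_i`-subgroup of `G/T_i` (expressed via orders: `|T_{i+1}| = |T_i| · p_i^{a_i}`
and `p_i` does not divide the index of `T_{i+1}` in `G`). -/
def HasSylowTower (G : Type*) [Group G] : Prop :=
  ∃ r : ℕ, ∃ T : Fin (r + 1) → Subgroup G,
    T 0 = ⊥ ∧ T (Fin.last r) = ⊤ ∧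
    (∀ i : Fin r, T i.castSucc ≤ T i.succ) ∧ (∀ i, (T i).Normal) ∧
    ∃ p : Fin r → ℕ, ∀ i : Fin r, (p i).Prime ∧
      (∃ a : ℕ, Nat.card (T i.succ) = Nat.card (T i.castSucc) * p i ^ a) ∧
      ¬ p i ∣ (T i.succ).index

open Subgroup QuotientGroup

lemma SS.of_surjective {G G' : Type*} [Group G] [Group G'] (f : G →* G')
    (hf : Function.Surjective f) (h : IsSupersolvable G) : IsSupersolvable G' := by
  obtain ⟨n, H, h0, hl, hmono, hnorm, hcyc⟩ := h
  refine ⟨n, fun i => (H i).map f, by simp [h0], by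
      show Subgroup.map f (H (Fin.last n)) = ⊤
      rw [hl, ← MonoidHom.range_eq_map, MonoidHom.range_eq_top.mpr hf], ?_, ?_, ?_⟩
  · exact fun i => Subgroup.map_mono (hmono i)
  · exact fun i => (hnorm i).map f hf
  · intro i
    obtain ⟨x, hx, hgen⟩ := hcyc i
    refine ⟨f x, Subgroup.mem_map_of_mem f hx, ?_⟩
    rintro y ⟨y, hy, rfl⟩
    obtain ⟨k, hk⟩ := hgen y hy
    exact ⟨k, by rw [← map_zpow, ← map_inv, ← map_mul]; exact Subgroup.mem_map_of_mem f hk⟩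

lemma SS.exists_normal_zpowers {G : Type*} [Group G] [Nontrivial G]
    (h : IsSupersolvable G) : ∃ x : G, x ≠ 1 ∧ (zpowers x).Normal := by
  obtain ⟨n, H, h0, hl, hmono, hnorm, hcyc⟩ := h
  have key : ∃ i : Fin n, H i.castSucc = ⊥ ∧ H i.succ ≠ ⊥ := by
    by_contra hc
    push_neg at hc
    have : ∀ j, H j = ⊥ := by
      intro j
      induction j using Fin.induction with
      | zero => exact h0
      | succ i ih => exact hc i ih
    exact absurd (hl ▸ this (Fin.last n)) (by simp)
  obtain ⟨i, hib, hit⟩ := key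
  obtain ⟨x, hx, hgen⟩ := hcyc i
  have heq : H i.succ = zpowers x := by
    refine le_antisymm (fun y hy => ?_) ((zpowers_le).mpr hx)
    obtain ⟨k, hk⟩ := hgen y hy
    rw [hib, Subgroup.mem_bot] at hk
    exact ⟨k, by rw [← mul_left_cancel_iff (a := (x ^ k)⁻¹), hk, inv_mul_cancel]⟩
  refine ⟨x, fun hx1 => hit ?_, heq ▸ hnorm i.succ⟩
  rw [heq, hx1, zpowers_one_eq_bot]

lemma SS.zpowers_pow_normal {G : Type*} [Group G] {x : G}
    (hx : (zpowers x).Normal) (m : ℕ) : (zpowers (x ^ m)).Normal := by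
  constructor
  rintro a ⟨k, rfl⟩ g
  obtain ⟨j, hj⟩ := hx.conj_mem x (mem_zpowers x) g
  have hj' : x ^ j = g * x * g⁻¹ := hj
  refine ⟨j * k, ?_⟩
  show (x ^ m) ^ (j * k) = g * (x ^ m) ^ k * g⁻¹
  calc (x ^ m) ^ (j * k) = ((x ^ j) ^ (m : ℤ)) ^ k := by
        rw [← zpow_natCast x m, ← zpow_mul, ← zpow_mul, ← zpow_mul]; ring_nf
    _ = g * (x ^ m) ^ k * g⁻¹ := by
        rw [hj', conj_zpow, conj_zpow, zpow_natCast]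

lemma SS.exists_prime_normal {G : Type*} [Group G] [Finite G] [Nontrivial G]
    (h : IsSupersolvable G) : ∃ N : Subgroup G, N.Normal ∧ (Nat.card N).Prime := by
  obtain ⟨x, hx1, hxn⟩ := SS.exists_normal_zpowers h
  set d := orderOf x with hd
  have hd1 : d ≠ 1 := by simpa [hd, orderOf_eq_one_iff] using hx1
  have hd0 : d ≠ 0 := (orderOf_pos x).ne'
  set q := d.minFac with hq
  have hqp : q.Prime := Nat.minFac_prime hd1
  have hqd : q ∣ d := Nat.minFac_dvd d
  refine ⟨zpowers (x ^ (d / q)), SS.zpowers_pow_normal hxn _, ?_⟩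
  rw [Nat.card_zpowers, orderOf_pow, ← hd,
    Nat.gcd_eq_right (Nat.div_dvd_of_dvd hqd), Nat.div_div_self hqd hd0]
  exact hqp

lemma SS.card_comap_mk' {G : Type*} [Group G] (N : Subgroup G) [N.Normal]
    (K : Subgroup (G ⧸ N)) :
    Nat.card (K.comap (QuotientGroup.mk' N)) = Nat.card N * Nat.card K := by
  have e : (K.comap (QuotientGroup.mk' N) : Set G) = QuotientGroup.mk ⁻¹' (K : Set (G ⧸ N)) := rfl
  calc Nat.card (K.comap (QuotientGroup.mk' N))
      = Nat.card (QuotientGroup.mk ⁻¹' (K : Set (G ⧸ N))) := by rw [← e]; rfl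
    _ = Nat.card (N × (K : Set (G ⧸ N))) :=
        Nat.card_congr (QuotientGroup.preimageMkEquivSubgroupProdSet N _)
    _ = Nat.card N * Nat.card K := by rw [Nat.card_prod]; rfl

lemma SS.sylow_normal_of_card_eq {G : Type*} [Group G] [Finite G] {p : ℕ} [Fact p.Prime]
    (K : Subgroup G) (hn : K.Normal) (hc : Nat.card K = p ^ (Nat.card G).factorization p) :
    ∀ P : Sylow p G, (P : Subgroup G).Normal := by
  intro P
  have hK : ((Sylow.ofCard K hc : Sylow p G) : Subgroup G).Normal := hn
  haveI := Sylow.unique_of_normal (Sylow.ofCard K hc) hK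
  rw [Subsingleton.elim P (Sylow.ofCard K hc)]
  exact hK

lemma SS.normal_of_subsingleton {G : Type*} [Group G] [Finite G] {p : ℕ} [Fact p.Prime]
    [Subsingleton (Sylow p G)] (P : Sylow p G) : (P : Subgroup G).Normal := by
  rw [← Subgroup.normalizer_eq_top_iff]
  rw [eq_top_iff']
  intro g
  exact Sylow.smul_eq_iff_mem_normalizer.mp (Subsingleton.elim _ _)

universe u

lemma SS.max_sylow_normal : ∀ (n : ℕ) (G : Type u) [Group G] [Finite G],
    Nat.card G ≤ n → IsSupersolvable G → ∀ p : ℕ, Fact p.Prime →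
    (∀ q : ℕ, q.Prime → q ∣ Nat.card G → q ≤ p) →
    ∀ P : Sylow p G, (P : Subgroup G).Normal := by
  intro n
  induction n with
  | zero =>
    intro G _ _ hle _ _ _ _ _
    exact absurd (Nat.card_pos.trans_le hle) (lt_irrefl 0)
  | succ n ih =>
    intro G _ _ hle hss p hp hmax P
    haveI := hp
    by_cases hG : Nat.card G = 1
    · haveI : Subsingleton G := (Nat.card_eq_one_iff_unique.mp hG).1
      exact ⟨fun a ha g => by rwa [Subsingleton.elim (g * a * g⁻¹) a]⟩
    haveI : Nontrivial G := Finite.one_lt_card_iff_nontrivial.mp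
      (by have := Nat.card_pos (α := G); omega)
    obtain ⟨N, hNn, hNq⟩ := SS.exists_prime_normal hss
    haveI := hNn
    set q := Nat.card N with hq
    have hqdvd : q ∣ Nat.card G := Subgroup.card_subgroup_dvd_card N
    have hqle : q ≤ p := hmax q hNq hqdvd
    have hcard : Nat.card G = Nat.card (G ⧸ N) * q :=
      Subgroup.card_eq_card_quotient_mul_card_subgroup N
    have hQpos : 0 < Nat.card (G ⧸ N) := Nat.card_pos
    have hquot_le : Nat.card (G ⧸ N) ≤ n := by
      have h2 : 2 ≤ q := hNq.two_le
      have hlt : Nat.card (G ⧸ N) < Nat.card G := by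
        rw [hcard]
        exact Nat.lt_mul_iff_one_lt_right hQpos |>.mpr (by omega)
      omega
    have hssq : IsSupersolvable (G ⧸ N) :=
      SS.of_surjective _ (QuotientGroup.mk'_surjective N) hss
    have hmaxq : ∀ r : ℕ, r.Prime → r ∣ Nat.card (G ⧸ N) → r ≤ p := fun r hr hrd =>
      hmax r hr (hrd.trans ⟨q, hcard⟩)
    set Q := (default : Sylow p (G ⧸ N)) with hQdef
    have hQn : (Q : Subgroup (G ⧸ N)).Normal := ih (G ⧸ N) hquot_le hssq p hp hmaxq Q
    set M := (Q : Subgroup (G ⧸ N)).comap (QuotientGroup.mk' N) with hM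
    have hMn : M.Normal := hQn.comap _
    have hMcard : Nat.card M = q * p ^ (Nat.card (G ⧸ N)).factorization p := by
      rw [hM, SS.card_comap_mk', Q.card_eq_multiplicity]
    by_cases hqp : q = p
    · refine SS.sylow_normal_of_card_eq M hMn ?_ P
      rw [hMcard, hqp, ← pow_succ']
      congr 1
      rw [hcard, Nat.factorization_mul hQpos.ne' hNq.pos.ne', Finsupp.add_apply,
        hNq.factorization, ← hqp]
      simp
    · -- q < p
      have hql : q < p := lt_of_le_of_ne hqle hqp
      have hb : (Nat.card (G ⧸ N)).factorization p = (Nat.card G).factorization p := by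
        rw [hcard, Nat.factorization_mul hQpos.ne' hNq.pos.ne', Finsupp.add_apply,
          hNq.factorization, Finsupp.single_apply, if_neg (fun h => hqp h)]
        simp
      set b := (Nat.card G).factorization p with hbdef
      have hMcard' : Nat.card M = q * p ^ b := by rw [hMcard, hb]
      set R := (default : Sylow p M) with hRdef
      have hRcard : Nat.card (R : Subgroup M) = p ^ b := by
        rw [R.card_eq_multiplicity]
        congr 1
        rw [hMcard', Nat.factorization_mul hNq.pos.ne' (pow_pos hp.out.pos b).ne',
          Finsupp.add_apply, hNq.factorization, Finsupp.single_apply,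
          if_neg (fun h => hqp h), hp.out.factorization_pow]
        simp
      have hRind : (R : Subgroup M).index = q := by
        have h1 : Nat.card (R : Subgroup M) * (R : Subgroup M).index = Nat.card M :=
          Subgroup.card_mul_index _
        rw [hRcard, hMcard', mul_comm q] at h1
        exact Nat.eq_of_mul_eq_mul_left (pow_pos hp.out.pos b) h1
      have hn1 : Nat.card (Sylow p M) = 1 := by
        have hdvd : Nat.card (Sylow p M) ∣ q := hRind ▸ Sylow.card_dvd_index R
        have hmod : Nat.card (Sylow p M) ≡ 1 [MOD p] := card_sylow_modEq_one p M
        rcases (hNq.eq_one_or_self_of_dvd _ hdvd) with h1 | h1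
        · exact h1
        · exfalso
          rw [h1] at hmod
          have : q % p = 1 % p := hmod
          rw [Nat.mod_eq_of_lt hql, Nat.mod_eq_of_lt hp.out.one_lt] at this
          exact hNq.one_lt.ne' this
      haveI : Subsingleton (Sylow p M) := (Nat.card_eq_one_iff_unique.mp hn1).1
      have hRn : (R : Subgroup M).Normal := SS.normal_of_subsingleton R
      haveI := hRn
      haveI : (R : Subgroup M).Characteristic := Sylow.characteristic_of_normal R hRn
      haveI := hMn
      refine SS.sylow_normal_of_card_eq ((R : Subgroup M).map M.subtype) inferInstance ?_ P
      rw [← Nat.card_congr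
        (Subgroup.equivMapOfInjective (R : Subgroup M) M.subtype M.subtype_injective).toEquiv]
      exact hRcard
lemma SS.tower_aux : ∀ (n : ℕ) (G : Type u) [Group G] [Finite G],
    Nat.card G ≤ n → IsSupersolvable G → HasSylowTower G := by
  intro n
  induction n with
  | zero =>
    intro G _ _ hle _
    exact absurd (Nat.card_pos.trans_le hle) (lt_irrefl 0)
  | succ n ih =>
    intro G _ _ hle hss
    by_cases hG : Nat.card G = 1
    · haveI : Subsingleton G := (Nat.card_eq_one_iff_unique.mp hG).1
      exact ⟨0, fun _ => ⊥, rfl,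
        by ext x; simp [Subgroup.mem_bot, Subsingleton.elim x 1],
        fun i => i.elim0, fun _ => inferInstance, Fin.elim0, fun i => i.elim0⟩
    haveI : Nontrivial G := Finite.one_lt_card_iff_nontrivial.mp
      (by have := Nat.card_pos (α := G); omega)
    have h1 : 1 < Nat.card G := by have := Nat.card_pos (α := G); omega
    set p := (Nat.card G).primeFactors.max' (Nat.nonempty_primeFactors.mpr h1) with hpdef
    have hpmem := (Nat.card G).primeFactors.max'_mem (Nat.nonempty_primeFactors.mpr h1)
    have hpp : p.Prime := Nat.prime_of_mem_primeFactors hpmem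
    have hpdvd : p ∣ Nat.card G := Nat.dvd_of_mem_primeFactors hpmem
    haveI : Fact p.Prime := ⟨hpp⟩
    set P := (default : Sylow p G) with hPdef
    have hPn : (P : Subgroup G).Normal :=
      SS.max_sylow_normal (n + 1) G hle hss p ‹_›
        (fun q hq hqd => Finset.le_max' _ q
          (Nat.mem_primeFactors.mpr ⟨hq, hqd, Nat.card_pos.ne'⟩)) P
    haveI := hPn
    have hPcard : Nat.card (P : Subgroup G) = p ^ (Nat.card G).factorization p :=
      P.card_eq_multiplicity
    have hfpos : 0 < (Nat.card G).factorization p :=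
      hpp.factorization_pos_of_dvd Nat.card_pos.ne' hpdvd
    have hPlt : 1 < Nat.card (P : Subgroup G) := by
      rw [hPcard]; exact Nat.one_lt_pow hfpos.ne' hpp.one_lt
    have hcard : Nat.card G = Nat.card (G ⧸ (P : Subgroup G)) * Nat.card (P : Subgroup G) :=
      Subgroup.card_eq_card_quotient_mul_card_subgroup _
    have hqpos : 0 < Nat.card (G ⧸ (P : Subgroup G)) := Nat.card_pos
    have hqle : Nat.card (G ⧸ (P : Subgroup G)) ≤ n := by
      have hlt : Nat.card (G ⧸ (P : Subgroup G)) < Nat.card G := by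
        rw [hcard]
        exact Nat.lt_mul_iff_one_lt_right hqpos |>.mpr hPlt
      omega
    obtain ⟨r, T', h0', hl', hmono', hnorm', pr, hpr⟩ :=
      ih (G ⧸ (P : Subgroup G)) hqle
        (SS.of_surjective _ (QuotientGroup.mk'_surjective _) hss)
    refine ⟨r + 1, Fin.cases ⊥ (fun j => (T' j).comap (QuotientGroup.mk' (P : Subgroup G))),
      by simp, ?_, ?_, ?_, Fin.cases p pr, ?_⟩
    · simp only [← Fin.succ_last, Fin.cases_succ, hl']
      exact Subgroup.comap_top _
    · intro i
      induction i using Fin.cases with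
      | zero => simp
      | succ j =>
        simp only [Fin.succ_castSucc, Fin.cases_succ]
        exact Subgroup.comap_mono (hmono' j)
    · intro i
      induction i using Fin.cases with
      | zero => simp only [Fin.cases_zero]; infer_instance
      | succ j => simp only [Fin.cases_succ]; exact (hnorm' j).comap _
    · intro i
      induction i using Fin.cases with
      | zero =>
        refine ⟨hpp, ⟨(Nat.card G).factorization p, ?_⟩, ?_⟩
        · simp only [Fin.castSucc_zero, Fin.cases_zero, Fin.cases_succ, h0',
            MonoidHom.comap_bot, QuotientGroup.ker_mk', Subgroup.card_bot, one_mul]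
          exact hPcard
        · simp only [Fin.cases_succ, Fin.cases_zero, h0', MonoidHom.comap_bot,
            QuotientGroup.ker_mk']
          exact P.not_dvd_index
      | succ j =>
        obtain ⟨hprime, ⟨a, ha⟩, hind⟩ := hpr j
        refine ⟨hprime, ⟨a, ?_⟩, ?_⟩
        · simp only [← Fin.succ_castSucc, Fin.cases_succ]
          rw [SS.card_comap_mk', SS.card_comap_mk', ha]
          ring
        · simp only [Fin.cases_succ]
          rw [Subgroup.index_comap_of_surjective _ (QuotientGroup.mk'_surjective _)]
          exact hind


/-- Every finite supersolvable group has a Sylow tower (Huppert VI, Satz 9.1). -/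
theorem sylow_tower_of_supersolvable {G : Type*} [Group G] [Fintype G]
    (h : IsSupersolvable G) : HasSylowTower G :=
  SS.tower_aux (Nat.card G) G le_rfl h
end

section
/- Let G be a finite group and u a normalized unit of order n in ℤG. Suppose ρ is a complex representation of G affording the character χ, extended linearly to ℤG. Then for each integer ℓ, the multiplicity of ζ_n^ℓ as an eigenvalue of ρ(u) equals (1/n) Σ_{d|n} Tr_{ℚ(ζ_n^d)/ℚ}(χ(u^d) ζ_n^{-dℓ}), and in particular this quantity is a non-negative integer. -/
/-!
Put `A = ρ(u)`, so that `A ^ n = 1`, and let `m_j` be the multiplicity of `ζ ^ j`. Averaging the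
powers of `(ζ ^ ℓ)⁻¹ • A` projects onto the `ζ ^ ℓ`-eigenspace, whence
`n · m_ℓ = ∑_{k < n} tr (A ^ k) ζ ^ (-kℓ)`, and Fourier inversion gives `tr (A ^ k) = p (ζ ^ k)`
for the polynomial `p = ∑_j m_j X ^ j` with rational coefficients. Grouping the `k < n`
according to the order `n / d` of `ζ ^ k`, the terms of order `n / d` are `p(β) β ^ (-ℓ)` for `β`
running over the primitive `(n / d)`-th roots of unity, i.e. over the conjugates of `ζ ^ d` over
`ℚ`; so they add up to the field trace of `tr (A ^ d) ζ ^ (-dℓ)`.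
-/

open scoped Classical

open Finset Polynomial Module IntermediateField

theorem geom_sum_eq_ite_of_pow_eq_one {K : Type*} [Field K] {w : K} {n : ℕ} (hw : w ^ n = 1) :
    ∑ j ∈ range n, w ^ j = if w = 1 then (n : K) else 0 := by
  split_ifs with h
  · simp [h]
  · rw [geom_sum_eq h, hw, sub_self, zero_div]

theorem IsPrimitiveRoot.sum_range_pow_eq_sum_divisors_sum_primitiveRoots {R M : Type*}
    [CommRing R] [IsDomain R] [AddCommMonoid M] {ζ : R} {n : ℕ} [NeZero n]
    (hζ : IsPrimitiveRoot ζ n) (f : R → M) :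
    ∑ k ∈ range n, f (ζ ^ k) = ∑ i ∈ n.divisors, ∑ β ∈ primitiveRoots i R, f β := by
  rw [← sum_biUnion fun i _ j _ hij => IsPrimitiveRoot.disjoint hij,
    ← nthRoots_one_eq_biUnion_primitiveRoots]
  refine sum_nbij (ζ ^ ·) (fun k _ => ?_)
    (fun a ha b hb h => hζ.pow_inj (mem_range.1 ha) (mem_range.1 hb) h) (fun β hβ => ?_)
    fun _ _ => rfl
  · rw [Polynomial.mem_nthRootsFinset (NeZero.pos n), pow_right_comm, hζ.pow_eq_one, one_pow]
  · obtain ⟨k, hk, rfl⟩ :=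
      hζ.eq_pow_of_pow_eq_one ((Polynomial.mem_nthRootsFinset (NeZero.pos n) _).1 hβ)
    exact ⟨k, mem_range.2 hk, rfl⟩

namespace Module.End

variable {K V : Type*} [Field K] [AddCommGroup V] [Module K V]

theorem isProj_eigenspace_one_average {B : Module.End K V} {n : ℕ} (hB : B ^ n = 1)
    (hn : (n : K) ≠ 0) :
    LinearMap.IsProj (eigenspace B 1) ((n : K)⁻¹ • ∑ k ∈ range n, B ^ k) where
  map_mem v := by
    have hfix : B * ∑ k ∈ range n, B ^ k = ∑ k ∈ range n, B ^ k := by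
      rw [← sub_eq_zero, ← sub_one_mul, mul_geom_sum, hB, sub_self]
    rw [mem_eigenspace_iff, one_smul, LinearMap.smul_apply, map_smul, ← mul_apply, hfix]
  map_id v hv := by
    rw [mem_eigenspace_iff, one_smul] at hv
    have hpow : ∀ k, (B ^ k) v = v := fun k => by
      induction k with
      | zero => rfl
      | succ k ih => rw [pow_succ, mul_apply, hv, ih]
    simp only [LinearMap.smul_apply, LinearMap.sum_apply, hpow, sum_const, card_range,
      ← Nat.cast_smul_eq_nsmul K, smul_smul, inv_mul_cancel₀ hn, one_smul]

theorem eigenspace_eq_eigenspace_inv_smul_one (A : Module.End K V) {μ : K} (hμ : μ ≠ 0) :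
    eigenspace A μ = eigenspace (μ⁻¹ • A) 1 := by
  ext v
  rw [mem_eigenspace_iff, mem_eigenspace_iff, LinearMap.smul_apply, one_smul,
    inv_smul_eq_iff₀ hμ]

variable [FiniteDimensional K V]

theorem natCast_mul_finrank_eigenspace_one {B : Module.End K V} {n : ℕ} (hB : B ^ n = 1)
    (hn : (n : K) ≠ 0) :
    (n : K) * finrank K (eigenspace B 1) = ∑ k ∈ range n, LinearMap.trace K V (B ^ k) := by
  rw [← (isProj_eigenspace_one_average hB hn).trace, map_smul, map_sum, smul_eq_mul,
    ← mul_assoc, mul_inv_cancel₀ hn, one_mul]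

theorem natCast_mul_finrank_eigenspace {A : Module.End K V} {n : ℕ} (hA : A ^ n = 1)
    (hn : (n : K) ≠ 0) {μ : K} (hμ : μ ^ n = 1) :
    (n : K) * finrank K (eigenspace A μ)
      = ∑ k ∈ range n, LinearMap.trace K V (A ^ k) * μ⁻¹ ^ k := by
  have hμ0 : μ ≠ 0 := by
    rintro rfl
    rw [zero_pow (by rintro rfl; simp at hn)] at hμ
    exact zero_ne_one hμ
  rw [eigenspace_eq_eigenspace_inv_smul_one A hμ0, natCast_mul_finrank_eigenspace_one
    (by rw [_root_.smul_pow, hA, inv_pow, hμ, inv_one, one_smul]) hn]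
  simp only [_root_.smul_pow, map_smul, smul_eq_mul, mul_comm]

theorem trace_pow_eq_sum_finrank_eigenspace_mul {ζ : K} {n : ℕ} [NeZero n]
    (hζ : IsPrimitiveRoot ζ n) {A : Module.End K V} (hA : A ^ n = 1) (k : ℕ) :
    LinearMap.trace K V (A ^ k)
      = ∑ j ∈ range n, (finrank K (eigenspace A (ζ ^ j)) : K) * (ζ ^ k) ^ j := by
  have hn : (n : K) ≠ 0 := hζ.neZero'.out
  have hroot : ∀ j, (ζ ^ j) ^ n = 1 := fun j => by rw [pow_right_comm, hζ.pow_eq_one, one_pow]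
  have hk : k % n < n := Nat.mod_lt k (NeZero.pos n)
  rw [pow_eq_pow_mod k hA, pow_eq_pow_mod k hζ.pow_eq_one]
  refine mul_left_cancel₀ hn ?_
  calc (n : K) * LinearMap.trace K V (A ^ (k % n))
      = ∑ t ∈ range n, LinearMap.trace K V (A ^ t) * if t = k % n then (n : K) else 0 := by
        simp only [mul_ite, mul_zero]
        rw [sum_ite_eq', if_pos (mem_range.2 hk), mul_comm]
    _ = ∑ t ∈ range n, LinearMap.trace K V (A ^ t)
          * ∑ j ∈ range n, (ζ ^ (k % n) * (ζ ^ t)⁻¹) ^ j := by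
        refine sum_congr rfl fun t ht => ?_
        have hpow : ζ ^ (k % n) = ζ ^ t ↔ t = k % n :=
          ⟨fun h => (hζ.pow_inj hk (mem_range.1 ht) h).symm, fun h => h ▸ rfl⟩
        rw [geom_sum_eq_ite_of_pow_eq_one
            (by rw [mul_pow, inv_pow, hroot, hroot, inv_one, mul_one]),
          mul_inv_eq_one₀ (pow_ne_zero _ (hζ.ne_zero (NeZero.ne n)))]
        simp only [hpow]
    _ = ∑ j ∈ range n, ((n : K) * finrank K (eigenspace A (ζ ^ j))) * (ζ ^ (k % n)) ^ j := by
        simp only [natCast_mul_finrank_eigenspace hA hn (hroot _), sum_mul, mul_sum]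
        rw [sum_comm]
        exact sum_congr rfl fun j _ => sum_congr rfl fun t _ => by ring
    _ = _ := by simp only [mul_sum, mul_assoc]

end Module.End

theorem IntermediateField.algebraMap_trace_adjoin_simple_eq_sum_aroots {F L : Type*} [Field F]
    [Field L] [Algebra F L] [IsAlgClosed L] {α : L} (hα : IsIntegral F α)
    [Algebra.IsSeparable F F⟮α⟯] (x : F⟮α⟯) (f : L → L)
    (hf : ∀ σ : F⟮α⟯ →ₐ[F] L, σ x = f (σ (AdjoinSimple.gen F α))) :
    algebraMap F L (Algebra.trace F F⟮α⟯ x)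
      = ∑ β ∈ ((minpoly F α).aroots L).toFinset, f β := by
  have : FiniteDimensional F F⟮α⟯ := adjoin.finiteDimensional hα
  rw [trace_eq_sum_embeddings (E := L)]
  simp only [hf]
  refine (Fintype.sum_equiv ((algHomAdjoinIntegralEquiv F (K := L) hα).trans
    (Equiv.subtypeEquivRight fun β => (Multiset.mem_toFinset (a := β)).symm))
    (fun σ => f (σ (AdjoinSimple.gen F α))) (fun β => f β) fun σ => ?_).trans
    (sum_coe_sort _ f)
  simp only [Equiv.trans_apply, Equiv.subtypeEquivRight_apply_coe]
  rw [← algHomAdjoinIntegralEquiv_symm_apply_gen F hα, Equiv.symm_apply_apply]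

section CharZeroAlgClosed

variable {L : Type*} [Field L] [CharZero L] [IsAlgClosed L]

theorem IsPrimitiveRoot.algebraMap_trace_adjoin_eq_sum_primitiveRoots {η : L} {m : ℕ}
    (hη : IsPrimitiveRoot η m) (hm : 0 < m) (x : ℚ⟮η⟯) (f : L → L)
    (hf : ∀ σ : ℚ⟮η⟯ →ₐ[ℚ] L, σ x = f (σ (AdjoinSimple.gen ℚ η))) :
    algebraMap ℚ L (Algebra.trace ℚ ℚ⟮η⟯ x) = ∑ β ∈ primitiveRoots m L, f β := by
  have hint : IsIntegral ℚ η := (hη.isIntegral hm).tower_top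
  have : FiniteDimensional ℚ ℚ⟮η⟯ := adjoin.finiteDimensional hint
  refine (algebraMap_trace_adjoin_simple_eq_sum_aroots hint x f hf).trans ?_
  rw [← cyclotomic_eq_minpoly_rat hη hm, aroots, map_cyclotomic]
  congr 1
  ext β
  rw [Multiset.mem_toFinset, mem_roots (cyclotomic_ne_zero m L),
    isRoot_cyclotomic_iff_charZero hm, mem_primitiveRoots hm]

open AdjoinSimple in
theorem IsPrimitiveRoot.ratCast_trace_aeval_mul_zpow {η : L} {m : ℕ}
    (hη : IsPrimitiveRoot η m) (hm : 0 < m) (p : ℚ[X]) (ℓ : ℤ) :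
    ((if h : aeval η p * η ^ ℓ ∈ ℚ⟮η⟯ then Algebra.trace ℚ ℚ⟮η⟯ ⟨aeval η p * η ^ ℓ, h⟩
      else 0 : ℚ) : L)
      = ∑ β ∈ primitiveRoots m L, aeval β p * β ^ ℓ := by
  set x : ℚ⟮η⟯ := aeval (gen ℚ η) p * gen ℚ η ^ ℓ
  have hx : algebraMap ℚ⟮η⟯ L x = aeval η p * η ^ ℓ := by
    rw [map_mul, map_zpow₀, ← aeval_algebraMap_apply, algebraMap_gen]
  simp only [← hx]
  split_ifs with h
  · exact (eq_ratCast (algebraMap ℚ L) _).symm.trans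
      (hη.algebraMap_trace_adjoin_eq_sum_primitiveRoots hm x _ fun σ => by
        rw [map_mul, aeval_algHom_apply, map_zpow₀])
  · exact (h x.2).elim

theorem Module.End.finrank_eigenspace_eq_sum_divisors_trace {V : Type*} [AddCommGroup V]
    [Module L V] [FiniteDimensional L V] {A : Module.End L V} {n : ℕ} (hn : 0 < n)
    (hA : A ^ n = 1) {ζ : L} (hζ : IsPrimitiveRoot ζ n) (ℓ : ℤ) :
    (finrank L (eigenspace A (ζ ^ ℓ)) : ℚ) = (n : ℚ)⁻¹ * ∑ d ∈ n.divisors,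
      (if h : LinearMap.trace L V (A ^ d) * ζ ^ (-((d : ℤ) * ℓ)) ∈ ℚ⟮ζ ^ d⟯ then
        Algebra.trace ℚ ℚ⟮ζ ^ d⟯ ⟨LinearMap.trace L V (A ^ d) * ζ ^ (-((d : ℤ) * ℓ)), h⟩
      else 0) := by
  have : NeZero n := ⟨hn.ne'⟩
  have hn' : (n : L) ≠ 0 := Nat.cast_ne_zero.2 hn.ne'
  set p : ℚ[X] := ∑ j ∈ range n, (finrank L (eigenspace A (ζ ^ j)) : ℚ[X]) * X ^ j
  have htrace : ∀ k : ℕ, LinearMap.trace L V (A ^ k) * ζ ^ (-((k : ℤ) * ℓ))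
      = aeval (ζ ^ k) p * (ζ ^ k) ^ (-ℓ) := fun k => by
    simp [p, trace_pow_eq_sum_finrank_eigenspace_mul hζ hA k, zpow_mul]
  have hfourier : (n : L) * finrank L (eigenspace A (ζ ^ ℓ))
      = ∑ k ∈ range n, aeval (ζ ^ k) p * (ζ ^ k) ^ (-ℓ) := by
    have hroot : (ζ ^ ℓ) ^ n = 1 := by
      rw [← zpow_natCast, ← zpow_mul, hζ.zpow_eq_one_iff_dvd]
      exact dvd_mul_left _ _
    rw [natCast_mul_finrank_eigenspace hA hn' hroot]
    refine sum_congr rfl fun k _ => ?_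
    rw [← htrace k, ← zpow_natCast, inv_zpow', ← zpow_mul, mul_comm ℓ, neg_mul]
  refine Rat.cast_injective (α := L) ?_
  push_cast
  calc (finrank L (eigenspace A (ζ ^ ℓ)) : L)
      = (n : L)⁻¹ * ∑ k ∈ range n, aeval (ζ ^ k) p * (ζ ^ k) ^ (-ℓ) := by
        rw [← hfourier, inv_mul_cancel_left₀ hn']
    _ = (n : L)⁻¹ * ∑ d ∈ n.divisors,
          ∑ β ∈ primitiveRoots (n / d) L, aeval β p * β ^ (-ℓ) := by
        rw [hζ.sum_range_pow_eq_sum_divisors_sum_primitiveRoots fun β => aeval β p * β ^ (-ℓ),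
          ← Nat.sum_div_divisors]
    _ = _ := by
        refine congrArg _ (sum_congr rfl fun d hd => ?_)
        have hd' := Nat.dvd_of_mem_divisors hd
        simp only [htrace]
        exact ((hζ.pow hn (Nat.mul_div_cancel' hd').symm).ratCast_trace_aeval_mul_zpow
          (Nat.div_pos (Nat.le_of_dvd hn hd') (Nat.pos_of_dvd_of_pos hd' hn)) p (-ℓ)).symm

end CharZeroAlgClosed

theorem help_multiplicity_formula_general {G : Type*} [Group G] [Fintype G]
    {V : Type*} [AddCommGroup V] [Module ℂ V] [FiniteDimensional ℂ V]
    (ρ : Representation ℂ G V)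
    (u : MonoidAlgebra ℤ G)
    (n : ℕ) (hn : 0 < n) (hord : orderOf u = n)
    (ζ : ℂ) (hζ : IsPrimitiveRoot ζ n) (ℓ : ℤ)
    (T : ℕ → Module.End ℂ V)
    (hT : ∀ d : ℕ, T d = ∑ g : G, (((u ^ d).coeff g : ℤ) : ℂ) • ρ g) :
    (Module.finrank ℂ (Module.End.eigenspace (T 1) (ζ ^ ℓ)) : ℚ)
      = (n : ℚ)⁻¹ * ∑ d ∈ n.divisors,
          (if h : (LinearMap.trace ℂ V (T d)) * ζ ^ (-((d : ℤ) * ℓ)) ∈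
              IntermediateField.adjoin ℚ ({ζ ^ d} : Set ℂ) then
            Algebra.trace ℚ (IntermediateField.adjoin ℚ ({ζ ^ d} : Set ℂ))
              ⟨(LinearMap.trace ℂ V (T d)) * ζ ^ (-((d : ℤ) * ℓ)), h⟩
          else 0) := by
  set A := MonoidAlgebra.lift ℤ (Module.End ℂ V) G ρ u
  have hTA : ∀ d, T d = A ^ d := fun d => by
    rw [hT, ← map_pow, MonoidAlgebra.lift_apply, Finsupp.sum_fintype _ _ (by simp)]
    simp only [Int.cast_smul_eq_zsmul]
  have hA : A ^ n = 1 := by rw [← map_pow, ← hord, pow_orderOf_eq_one, map_one]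
  rw [hTA 1, pow_one]
  simp only [hTA]
  exact Module.End.finrank_eigenspace_eq_sum_divisors_trace hn hA hζ ℓ

/-- The Luthar–Passi (HeLP) multiplicity formula (2.2): let `u` be a normalized
unit of order `n` in `ℤG`, `ρ` a complex representation of `G` (extended linearly
to the group ring, `T d` being the image of `u^d`), `ζ` a primitive `n`-th root
of unity. Then for each `ℓ` the multiplicity of `ζ^ℓ` as an eigenvalue of `ρ(u)`
equals `(1/n) ∑_{d ∣ n} Tr_{ℚ(ζ^d)/ℚ}(χ(u^d) ζ^{-dℓ})`; in particular this
quantity is a non-negative integer. -/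
theorem help_multiplicity_formula {G : Type*} [Group G] [Fintype G]
    {V : Type*} [AddCommGroup V] [Module ℂ V] [FiniteDimensional ℂ V]
    (ρ : Representation ℂ G V)
    (u : MonoidAlgebra ℤ G) (hu : IsUnit u) (haug : ∑ g : G, u.coeff g = 1)
    (n : ℕ) (hn : 0 < n) (hord : orderOf u = n)
    (ζ : ℂ) (hζ : IsPrimitiveRoot ζ n) (ℓ : ℤ)
    (T : ℕ → Module.End ℂ V)
    (hT : ∀ d : ℕ, T d = ∑ g : G, (((u ^ d).coeff g : ℤ) : ℂ) • ρ g) :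
    (Module.finrank ℂ (Module.End.eigenspace (T 1) (ζ ^ ℓ)) : ℚ)
      = (n : ℚ)⁻¹ * ∑ d ∈ n.divisors,
          (if h : (LinearMap.trace ℂ V (T d)) * ζ ^ (-((d : ℤ) * ℓ)) ∈
              IntermediateField.adjoin ℚ ({ζ ^ d} : Set ℂ) then
            Algebra.trace ℚ (IntermediateField.adjoin ℚ ({ζ ^ d} : Set ℂ))
              ⟨(LinearMap.trace ℂ V (T d)) * ζ ^ (-((d : ℤ) * ℓ)), h⟩
          else 0) :=
  help_multiplicity_formula_general ρ u n hn hord ζ hζ ℓ T hT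
end

section
/- Let O be the ring of integers of a number field K, G a finite group, and u ∈ OG a normalized torsion unit of order n ≠ 1. Then the coefficient of u at the identity element is 0 (Berman–Higman for G-adapted coefficient rings). -/
/-!
For an embedding `φ : K → ℂ`, left multiplication by the image `v` of `u` in `ℂG` has finite
order, so its eigenvalues are roots of unity, and its trace is `|G| • v₁`. Hence `‖φ u₁‖ ≤ 1`,
with equality only if all eigenvalues coincide; a finite-order operator is semisimple, so it is
then a scalar and `v = v₁ • 1`. If `u₁ ≠ 0`, Kronecker's theorem makes the algebraic integer `u₁`
a root of unity, so equality does hold: `u` is a scalar, the augmentation forces `u = 1`, and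
`u` has order `1`.
-/

open Polynomial ComplexConjugate

namespace Complex

theorem re_conj_mul_lt_one {w c : ℂ} (hw : ‖w‖ ≤ 1) (hc : ‖c‖ = 1) (hne : w ≠ c) :
    (conj c * w).re < 1 := by
  have hdist : 0 < normSq (w - c) := normSq_pos.mpr (sub_ne_zero.mpr hne)
  have hw' : normSq w ≤ 1 := by
    rw [normSq_eq_norm_sq]
    nlinarith [norm_nonneg w]
  have hc' : normSq c = 1 := by rw [normSq_eq_norm_sq, hc, one_pow]
  rw [normSq_sub, mul_comm w] at hdist
  linarith

theorem eq_of_multiset_sum_eq_card_smul {s : Multiset ℂ} {c : ℂ} (hs : ∀ z ∈ s, ‖z‖ ≤ 1)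
    (hc : ‖c‖ = 1) (hsum : s.sum = s.card • c) : ∀ z ∈ s, z = c := by
  by_contra! ⟨z, hz, hzc⟩
  have hlt : (s.map fun w => (conj c * w).re).sum < (s.map fun _ => (1 : ℝ)).sum :=
    Multiset.sum_lt_sum (fun w hw => (re_le_norm _).trans (by simpa [hc] using hs w hw))
      ⟨z, hz, re_conj_mul_lt_one (hs z hz) hc hzc⟩
  have hre : (s.map fun w => (conj c * w).re).sum = (conj c * s.sum).re :=
    calc _ = reAddGroupHom (s.map (conj c * ·)).sum := by
          rw [map_multiset_sum, Multiset.map_map]; rfl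
      _ = _ := by rw [Multiset.sum_map_mul_left, Multiset.map_id']; rfl
  rw [hre, hsum, nsmul_eq_mul, mul_left_comm, conj_mul', hc] at hlt
  simp at hlt

end Complex

namespace Module.End

section

variable {K V : Type*} [Field K] [AddCommGroup V] [Module K V] {f : End K V} {n : ℕ}

theorem isSemisimple_of_pow_eq_one [CharZero K] (hf : f ^ n = 1) (hn : n ≠ 0) :
    f.IsSemisimple := by
  refine isSemisimple_of_squarefree_aeval_eq_zero (p := X ^ n - C 1) ?_ (by simp [hf])
  exact (separable_X_pow_sub_C 1 (Nat.cast_ne_zero.mpr hn) one_ne_zero).squarefree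

variable [FiniteDimensional K V]

theorem pow_eq_one_of_mem_roots_charpoly (hf : f ^ n = 1) {μ : K} (hμ : μ ∈ f.charpoly.roots) :
    μ ^ n = 1 := by
  have hμ' : f.HasEigenvalue μ :=
    (hasEigenvalue_iff_isRoot_charpoly f μ).mpr (isRoot_of_mem_roots hμ)
  obtain ⟨v, hv⟩ := (hμ'.pow n).exists_hasEigenvector
  rw [hf] at hv
  have hfix : (μ ^ n - 1) • v = 0 := by
    rw [sub_smul, ← hv.apply_eq_smul, one_smul, one_apply, sub_self]
  exact sub_eq_zero.mp ((smul_eq_zero.mp hfix).resolve_right hv.2)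

section IsAlgClosed

variable [IsAlgClosed K]

theorem card_roots_charpoly_eq_finrank (f : End K V) : f.charpoly.roots.card = finrank K V := by
  rw [splits_iff_card_roots.mp (IsAlgClosed.splits f.charpoly), f.charpoly_natDegree]

theorem trace_eq_sum_roots_charpoly (f : End K V) :
    LinearMap.trace K V f = f.charpoly.roots.sum :=
  trace_eq_sum_roots_charpoly_of_splits (IsAlgClosed.splits f.charpoly)

theorem isNilpotent_sub_algebraMap_of_forall_roots_charpoly_eq {c : K}
    (h : ∀ μ ∈ f.charpoly.roots, μ = c) : IsNilpotent (f - algebraMap K (End K V) c) := by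
  have hroots : f.charpoly.roots = Multiset.replicate (finrank K V) c :=
    Multiset.eq_replicate.mpr ⟨card_roots_charpoly_eq_finrank f, h⟩
  have hchar : f.charpoly = (X - C c) ^ finrank K V := by
    rw [(IsAlgClosed.splits f.charpoly).eq_prod_roots_of_monic f.charpoly_monic, hroots,
      Multiset.map_replicate, Multiset.prod_replicate]
  refine ⟨finrank K V, ?_⟩
  simpa [hchar] using f.aeval_self_charpoly

theorem eq_algebraMap_of_forall_roots_charpoly_eq [CharZero K] (hf : f ^ n = 1) (hn : n ≠ 0)
    {c : K} (h : ∀ μ ∈ f.charpoly.roots, μ = c) : f = algebraMap K (End K V) c :=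
  sub_eq_zero.mp <| eq_zero_of_isNilpotent_isSemisimple
    (isNilpotent_sub_algebraMap_of_forall_roots_charpoly_eq h)
    (isSemisimple_sub_algebraMap_iff.mpr (isSemisimple_of_pow_eq_one hf hn))

end IsAlgClosed

end

section Complex

variable {V : Type*} [AddCommGroup V] [Module ℂ V] [FiniteDimensional ℂ V] {f : End ℂ V} {n : ℕ}

theorem norm_eq_one_of_mem_roots_charpoly (hf : f ^ n = 1) (hn : n ≠ 0) {μ : ℂ}
    (hμ : μ ∈ f.charpoly.roots) : ‖μ‖ = 1 :=
  Complex.norm_eq_one_of_pow_eq_one (pow_eq_one_of_mem_roots_charpoly hf hμ) hn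

theorem norm_trace_le_finrank_of_pow_eq_one (hf : f ^ n = 1) (hn : n ≠ 0) :
    ‖LinearMap.trace ℂ V f‖ ≤ finrank ℂ V :=
  calc ‖LinearMap.trace ℂ V f‖ = ‖f.charpoly.roots.sum‖ := by rw [trace_eq_sum_roots_charpoly]
    _ ≤ (f.charpoly.roots.map (‖·‖)).sum := norm_multiset_sum_le _
    _ ≤ (f.charpoly.roots.map (‖·‖)).card • 1 := Multiset.sum_le_card_nsmul _ _ <| by
          simp only [Multiset.mem_map]
          rintro _ ⟨μ, hμ, rfl⟩
          exact (norm_eq_one_of_mem_roots_charpoly hf hn hμ).le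
    _ = finrank ℂ V := by simp [card_roots_charpoly_eq_finrank]

theorem eq_algebraMap_of_trace_eq_finrank_smul (hf : f ^ n = 1) (hn : n ≠ 0) {c : ℂ}
    (hc : ‖c‖ = 1) (htr : LinearMap.trace ℂ V f = finrank ℂ V • c) :
    f = algebraMap ℂ (End ℂ V) c := by
  refine eq_algebraMap_of_forall_roots_charpoly_eq hf hn
    (Complex.eq_of_multiset_sum_eq_card_smul (fun μ hμ => ?_) hc ?_)
  · exact (norm_eq_one_of_mem_roots_charpoly hf hn hμ).le
  · rw [← trace_eq_sum_roots_charpoly, htr, card_roots_charpoly_eq_finrank]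

end Complex

end Module.End

theorem LinearMap.mulLeft_pow_eq_one {R A : Type*} [CommSemiring R] [Semiring A] [Algebra R A]
    {a : A} {n : ℕ} (ha : a ^ n = 1) : mulLeft R a ^ n = 1 := by
  rw [pow_mulLeft, ha, mulLeft_one]
  rfl

namespace MonoidAlgebra

theorem trace_mulLeft {k G : Type*} [CommRing k] [Group G] [Fintype G] (v : MonoidAlgebra k G) :
    LinearMap.trace k _ (LinearMap.mulLeft k v) = Fintype.card G • v.coeff 1 := by
  classical
  rw [LinearMap.trace_eq_matrix_trace k (basis G k), Matrix.trace]
  simp only [Matrix.diag, LinearMap.toMatrix_apply, basis_apply, LinearMap.mulLeft_apply]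
  change ∑ g, (v * single g 1).coeff g = _
  simp

variable {G : Type*} [Group G] [Fintype G] {v : MonoidAlgebra ℂ G} {n : ℕ}

theorem norm_coeff_one_le_one_of_pow_eq_one (hv : v ^ n = 1) (hn : n ≠ 0) :
    ‖v.coeff 1‖ ≤ 1 := by
  have h := Module.End.norm_trace_le_finrank_of_pow_eq_one (LinearMap.mulLeft_pow_eq_one hv) hn
  rw [trace_mulLeft, Module.finrank_eq_card_basis (basis G ℂ), nsmul_eq_mul, norm_mul,
    Complex.norm_natCast] at h
  exact le_of_mul_le_mul_left (by simpa using h) (by exact_mod_cast Fintype.card_pos)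

theorem eq_algebraMap_of_pow_eq_one_of_norm_coeff_one (hv : v ^ n = 1) (hn : n ≠ 0)
    (h : ‖v.coeff 1‖ = 1) : v = algebraMap ℂ (MonoidAlgebra ℂ G) (v.coeff 1) := by
  have hmul := Module.End.eq_algebraMap_of_trace_eq_finrank_smul
    (LinearMap.mulLeft_pow_eq_one hv) hn h
    (by rw [trace_mulLeft, Module.finrank_eq_card_basis (basis G ℂ)])
  rw [Algebra.algebraMap_eq_smul_one]
  simpa using LinearMap.congr_fun hmul 1

end MonoidAlgebra

open NumberField MonoidAlgebra

theorem NumberField.norm_embedding_eq_one_of_norm_le_one {K : Type*} [Field K] [NumberField K]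
    {x : K} (hx₀ : x ≠ 0) (hxi : IsIntegral ℤ x) (hx : ∀ φ : K →+* ℂ, ‖φ x‖ ≤ 1)
    (φ : K →+* ℂ) : ‖φ x‖ = 1 := by
  obtain ⟨m, hm, hxm⟩ := Embeddings.pow_eq_one_of_norm_le_one K ℂ hx₀ hxi hx
  exact Complex.norm_eq_one_of_pow_eq_one (by rw [← map_pow, hxm, map_one]) hm.ne'

theorem berman_higman_ring_of_integers_general {K : Type*} [Field K] [NumberField K]
    {G : Type*} [Group G] [Fintype G]
    (u : MonoidAlgebra (NumberField.RingOfIntegers K) G)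
    (haug : ∑ g : G, u.coeff g = 1)
    (n : ℕ) (hn0 : n ≠ 0) (hn1 : n ≠ 1) (hord : orderOf u = n) :
    u.coeff 1 = 0 := by
  by_contra h1
  have hun : u ^ n = 1 := hord ▸ pow_orderOf_eq_one u
  let ψ (φ : K →+* ℂ) : 𝓞 K →+* ℂ := φ.comp (algebraMap (𝓞 K) K)
  have hψu (φ : K →+* ℂ) : mapRingHom G (ψ φ) u ^ n = 1 := by rw [← map_pow, hun, map_one]
  have hle (φ : K →+* ℂ) : ‖φ (u.coeff 1)‖ ≤ 1 := by
    simpa [ψ] using norm_coeff_one_le_one_of_pow_eq_one (hψu φ) hn0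
  obtain ⟨φ⟩ : Nonempty (K →+* ℂ) := inferInstance
  have hnorm := norm_embedding_eq_one_of_norm_le_one (by simpa using h1)
    (RingOfIntegers.isIntegral_coe _) hle φ
  have hscalar : u = algebraMap (𝓞 K) _ (u.coeff 1) := by
    refine map_injective (ψ φ).toAddMonoidHom
      (φ.injective.comp RingOfIntegers.coe_injective) ?_
    change mapRingHom G (ψ φ) u = mapRingHom G (ψ φ) (algebraMap _ _ _)
    rw [eq_algebraMap_of_pow_eq_one_of_norm_coeff_one (hψu φ) hn0 (by simpa [ψ] using hnorm),
      coeff_mapRingHom, ← RingHom.comp_apply, ← mapRingHom_comp_algebraMap]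
    rfl
  have hu1 : u.coeff 1 = 1 := by
    rw [hscalar] at haug
    simpa using haug
  exact hn1 (by rw [← hord, hscalar, hu1, map_one, orderOf_one])

/-- The Berman–Higman theorem for coefficients in a ring of algebraic integers:
if `O` is the ring of integers of a number field `K`, `G` a finite group and
`u ∈ OG` a normalized (augmentation one) torsion unit of order `n ≠ 1`, then the
coefficient of `u` at the identity element is `0`. -/
theorem berman_higman_ring_of_integers {K : Type*} [Field K] [NumberField K]
    {G : Type*} [Group G] [Fintype G]
    (u : MonoidAlgebra (NumberField.RingOfIntegers K) G) (hu : IsUnit u)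
    (haug : ∑ g : G, u.coeff g = 1)
    (n : ℕ) (hn0 : n ≠ 0) (hn1 : n ≠ 1) (hord : orderOf u = n) :
    u.coeff 1 = 0 :=
  berman_higman_ring_of_integers_general u haug n hn0 hn1 hord
end

section
/- Let D = H × G be a direct product of finite groups, p a prime, M a normal p-subgroup of D, and u ∈ V(ℤD) a torsion unit of order p^m·k with gcd(p,k)=1. Denote by ū the image of u in ℤ(D/M) and assume o(ū) < o(u) and that the generalized trace ε_{D/M[w]}(ū) is nonzero only for w = o(ū). Assume further that ε_g(u) = 0 whenever the p-part of g has order less than p^m (Hertweck), that ε_g(u) = 0 unless o(g) divides o(u), and that any torsion unit of ℤD mapping to 1 in ℤ(D/M) is a p-element. Then ε_{D[j]}(u) = 0 for all j ≠ o(u). -/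
open scoped Classical

def IsPPart {D : Type*} [Group D] (p : ℕ) (g h : D) : Prop :=
  h ∈ Subgroup.zpowers g ∧ (∃ n : ℕ, orderOf h = p ^ n) ∧
    ∃ h' ∈ Subgroup.zpowers g, g = h * h' ∧ ¬ p ∣ orderOf h'

/-!
The two vanishing results for partial augmentations kill every `ε_g(u)` unless
`p^m ∣ o(g) ∣ o(u)`, and among such orders `o(g)` is determined by its `p'`-part. So for
`j = p^m k'` the trace `ε_{D[j]}(u)` is the sum of the coefficients of `u` over all `g` whose
order has `p'`-part `k'`. Reduction modulo the `p`-group `M` preserves `p'`-parts of orders,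
so this sum equals the analogous sum for `ū`, which vanishes unless `k'` is the `p'`-part of
`o(ū)`. As `u^{o(ū)}` maps to `1`, it is a `p`-element, so `o(ū)` has the same `p'`-part `k`
as `o(u)`; and `k' = k` would mean `j = o(u)`.
-/

theorem Finset.sum_ite_eq_zero_of_sum_fiber_eq_zero {α ι M : Type*} [Fintype α] [DecidableEq ι]
    [AddCommMonoid M] (φ : α → ι) (f : α → M) {P : α → Prop} [DecidablePred P]
    (hP : ∀ a b, φ a = φ b → P a → P b)
    (h : ∀ a, P a → ∑ x, (if φ x = φ a then f x else 0) = 0) :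
    ∑ x, (if P x then f x else 0) = 0 := by
  have hfib : ∀ a ∈ (univ : Finset α), (0 : M) = ∑ x with φ x = φ a, if P x then f x else 0 := by
    intro a _
    rw [Finset.sum_filter]
    by_cases ha : P a
    · refine (h a ha).symm.trans (Finset.sum_congr rfl fun x _ => ?_)
      by_cases hx : φ x = φ a
      · simp [hx, hP a x hx.symm ha]
      · simp [hx]
    · refine (Finset.sum_eq_zero fun x _ => ?_).symm
      split_ifs with hx hPx <;> first | rfl | exact absurd (hP x a hx ‹_›) ha
  simpa using (Finset.sum_image' (f := fun _ => (0 : M)) _ hfib).symm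

theorem IsConj.orderOf_eq {G : Type*} [Group G] {g x : G} (h : IsConj g x) :
    orderOf g = orderOf x := by
  obtain ⟨c, hc⟩ := h
  exact hc.orderOf_eq (c : G)

namespace Nat

theorem ordCompl_mul_prime_pow {p : ℕ} (hp : p.Prime) (n a : ℕ) :
    ordCompl[p] (n * p ^ a) = ordCompl[p] n := by
  rw [ordCompl_mul, ordCompl_self_pow hp, mul_one]

theorem factorization_eq_of_pow_dvd_of_dvd {p m k d : ℕ} (hp : p.Prime) (hk : ¬ p ∣ k)
    (hm : p ^ m ∣ d) (hd : d ∣ p ^ m * k) : d.factorization p = m := by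
  have hk0 : k ≠ 0 := by rintro rfl; exact hk (dvd_zero p)
  have hn0 : p ^ m * k ≠ 0 := mul_ne_zero (pow_ne_zero m hp.ne_zero) hk0
  have hd0 : d ≠ 0 := ne_zero_of_dvd_ne_zero hn0 hd
  refine le_antisymm ?_ ((hp.pow_dvd_iff_le_factorization hd0).mp hm)
  have := (factorization_le_iff_dvd hd0 hn0).mpr hd p
  rwa [factorization_mul (pow_ne_zero m hp.ne_zero) hk0, Finsupp.add_apply,
    hp.factorization_pow, Finsupp.single_eq_same, factorization_eq_zero_of_not_dvd hk,
    add_zero] at this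

theorem eq_of_ordCompl_eq {p m k d e : ℕ} (hp : p.Prime) (hk : ¬ p ∣ k)
    (hd : p ^ m ∣ d ∧ d ∣ p ^ m * k) (he : p ^ m ∣ e ∧ e ∣ p ^ m * k)
    (h : ordCompl[p] d = ordCompl[p] e) : d = e := by
  rw [← ordProj_mul_ordCompl_eq_self d p, ← ordProj_mul_ordCompl_eq_self e p, h,
    factorization_eq_of_pow_dvd_of_dvd hp hk hd.1 hd.2,
    factorization_eq_of_pow_dvd_of_dvd hp hk he.1 he.2]

end Nat

section ClassSums

variable {G M : Type*} [Group G] [Fintype G] [AddCommMonoid M]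
  [DecidableRel (IsConj : G → G → Prop)]

theorem sum_ite_eq_zero_of_sum_conj_eq_zero (f : G → M) {P : G → Prop} [DecidablePred P]
    (hP : ∀ g x, IsConj g x → P g → P x)
    (h : ∀ g, P g → ∑ x, (if IsConj g x then f x else 0) = 0) :
    ∑ x, (if P x then f x else 0) = 0 :=
  Finset.sum_ite_eq_zero_of_sum_fiber_eq_zero ConjClasses.mk f
    (fun a b hab => hP a b (ConjClasses.mk_eq_mk_iff_isConj.mp hab))
    (fun g hg => by simpa only [ConjClasses.mk_eq_mk_iff_isConj, isConj_comm] using h g hg)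

theorem sum_ite_eq_sum_ite_and_of_sum_conj_eq_zero (f : G → M) {P Q : G → Prop}
    [DecidablePred P] [DecidablePred Q]
    (hP : ∀ g x, IsConj g x → P g → P x) (hQ : ∀ g x, IsConj g x → Q g → Q x)
    (h : ∀ g, ¬ Q g → ∑ x, (if IsConj g x then f x else 0) = 0) :
    ∑ x, (if P x then f x else 0) = ∑ x, if P x ∧ Q x then f x else 0 := by
  have hsplit : ∀ x, (if P x then f x else 0) =
      (if P x ∧ Q x then f x else 0) + if P x ∧ ¬ Q x then f x else 0 := by
    intro x
    by_cases hPx : P x <;> by_cases hQx : Q x <;> simp [hPx, hQx]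
  have hrest : ∑ x, (if P x ∧ ¬ Q x then f x else 0) = 0 :=
    sum_ite_eq_zero_of_sum_conj_eq_zero f
      (fun g x hgx ⟨hPg, hQg⟩ => ⟨hP g x hgx hPg, fun hQx => hQg (hQ x g hgx.symm hQx)⟩)
      (fun g hg => h g hg.2)
  rw [Finset.sum_congr rfl fun x _ => hsplit x, Finset.sum_add_distrib, hrest, add_zero]

theorem sum_ite_orderOf_eq_sum_ite_ordCompl_orderOf (f : G → M) {p m k j : ℕ} (hp : p.Prime)
    (hk : ¬ p ∣ k)
    (hf : ∀ g, ¬ (p ^ m ∣ orderOf g ∧ orderOf g ∣ p ^ m * k) →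
      ∑ x, (if IsConj g x then f x else 0) = 0)
    (hj : p ^ m ∣ j ∧ j ∣ p ^ m * k) :
    ∑ g, (if orderOf g = j then f g else 0) =
      ∑ g, if ordCompl[p] (orderOf g) = ordCompl[p] j then f g else 0 := by
  have hrestrict (Q : ℕ → Prop) [DecidablePred Q] :
      ∑ g, (if Q (orderOf g) then f g else 0) =
        ∑ g, if Q (orderOf g) ∧ p ^ m ∣ orderOf g ∧ orderOf g ∣ p ^ m * k then f g else 0 :=
    sum_ite_eq_sum_ite_and_of_sum_conj_eq_zero f (fun _ _ hgx => hgx.orderOf_eq ▸ id)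
      (fun _ _ hgx => hgx.orderOf_eq ▸ id) hf
  rw [hrestrict (· = j), hrestrict (ordCompl[p] · = ordCompl[p] j)]
  refine Finset.sum_congr rfl fun g _ => if_congr ⟨?_, ?_⟩ rfl rfl
  · rintro ⟨rfl, hg⟩
    exact ⟨rfl, hg⟩
  · rintro ⟨hc, hg⟩
    exact ⟨Nat.eq_of_ordCompl_eq hp hk hg hj hc, hg⟩

end ClassSums

theorem sum_ite_orderOf_eq_zero {G M : Type*} [Monoid G] [Fintype G] [AddCommMonoid M]
    (v : G → M) {n : ℕ} (hv : ∀ w, (∑ y, if orderOf y = w then v y else 0) ≠ 0 → w = n)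
    {Q : ℕ → Prop} [DecidablePred Q] (hQ : ¬ Q n) :
    ∑ y, (if Q (orderOf y) then v y else 0) = 0 :=
  Finset.sum_ite_eq_zero_of_sum_fiber_eq_zero orderOf v (fun _ _ hab => hab ▸ id)
    fun _ hy => by_contra fun hne => hQ (hv _ hne ▸ hy)

theorem Finsupp.sum_ite_mapDomain {α β M : Type*} [Fintype α] [Fintype β] [AddCommMonoid M]
    (f : α → β) (v : α →₀ M) (P : β → Prop) [DecidablePred P] :
    ∑ y, (if P y then Finsupp.mapDomain f v y else 0) = ∑ x, if P (f x) then v x else 0 := by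
  rw [← Finsupp.sum_fintype _ (fun y a => if P y then a else 0) (fun _ => by simp),
    Finsupp.sum_mapDomain_index (fun _ => by simp) (fun _ _ _ => by split_ifs <;> simp),
    Finsupp.sum_fintype _ _ (fun _ => by simp)]

theorem orderOf_eq_orderOf_map_mul_orderOf_pow {G H F : Type*} [Monoid G] [Monoid H]
    [FunLike F G H] [MonoidHomClass F G H] (f : F) {x : G} (hx : IsOfFinOrder x) :
    orderOf x = orderOf (f x) * orderOf (x ^ orderOf (f x)) := by
  have hdvd : orderOf (f x) ∣ orderOf x := orderOf_map_dvd (f : G →* H) x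
  have hpos : orderOf (f x) ≠ 0 := ((f : G →* H).isOfFinOrder hx).orderOf_pos.ne'
  rw [orderOf_pow' x hpos, Nat.gcd_eq_right hdvd, Nat.mul_div_cancel' hdvd]

theorem ordCompl_orderOf_map_eq {G H F : Type*} [Monoid G] [Monoid H]
    [FunLike F G H] [MonoidHomClass F G H] {p : ℕ} (hp : p.Prime) (f : F) {x : G}
    (hx : IsOfFinOrder x) {a : ℕ} (ha : orderOf (x ^ orderOf (f x)) = p ^ a) :
    ordCompl[p] (orderOf (f x)) = ordCompl[p] (orderOf x) := by
  rw [orderOf_eq_orderOf_map_mul_orderOf_pow f hx, ha, Nat.ordCompl_mul_prime_pow hp]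

theorem ordCompl_orderOf_mk {G : Type*} [Group G] {p : ℕ} (hp : p.Prime) {N : Subgroup G}
    [N.Normal] (hN : IsPGroup p N) {g : G} (hg : IsOfFinOrder g) :
    ordCompl[p] (orderOf (g : G ⧸ N)) = ordCompl[p] (orderOf g) := by
  have : Fact p.Prime := ⟨hp⟩
  have hmem : g ^ orderOf (QuotientGroup.mk' N g) ∈ N := by
    rw [← QuotientGroup.eq_one_iff, QuotientGroup.mk_pow, ← QuotientGroup.mk'_apply,
      pow_orderOf_eq_one]
  obtain ⟨a, ha⟩ := IsPGroup.iff_orderOf.mp hN ⟨_, hmem⟩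
  rw [Subgroup.orderOf_mk] at ha
  exact ordCompl_orderOf_map_eq hp (QuotientGroup.mk' N) hg ha

theorem sum_ite_ordCompl_orderOf_mapDomain {G R : Type*} [Group G] [Fintype G] [Semiring R]
    {p : ℕ} (hp : p.Prime) {N : Subgroup G} [N.Normal] (hN : IsPGroup p N)
    (v : MonoidAlgebra R G) (c : ℕ) :
    ∑ y : G ⧸ N, (if ordCompl[p] (orderOf y) = c then
        (MonoidAlgebra.mapDomainRingHom R (QuotientGroup.mk' N) v).coeff y else 0) =
      ∑ g : G, if ordCompl[p] (orderOf g) = c then v.coeff g else 0 := by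
  rw [MonoidAlgebra.mapDomainRingHom_apply]
  refine (Finsupp.sum_ite_mapDomain _ v.coeff _).trans (Finset.sum_congr rfl fun g _ => ?_)
  rw [QuotientGroup.mk'_apply, ordCompl_orderOf_mk hp hN (isOfFinOrder_of_finite g)]

theorem IsPPart.orderOf_lt {G : Type*} [Group G] {p m : ℕ} (hp : 1 < p) {g h : G}
    (hh : IsPPart p g h) (hm : ¬ p ^ m ∣ orderOf g) : orderOf h < p ^ m := by
  obtain ⟨hmem, ⟨a, ha⟩, -⟩ := hh
  have hdvd : p ^ a ∣ orderOf g := ha ▸ orderOf_dvd_of_mem_zpowers hmem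
  have ham : a < m := by
    by_contra! hma
    exact hm ((pow_dvd_pow p hma).trans hdvd)
  exact ha ▸ Nat.pow_lt_pow_right hp ham

theorem generalized_trace_vanishing_general {H K : Type*} [Group H] [Group K]
    [Fintype H] [Fintype K]
    (p : ℕ) (hp : p.Prime)
    (M : Subgroup (H × K)) [M.Normal] (hM : IsPGroup p M)
    (u : MonoidAlgebra ℤ (H × K)) (hu : IsUnit u)
    (m k : ℕ) (hk : ¬ p ∣ k) (hord : orderOf u = p ^ m * k)
    (ubar : MonoidAlgebra ℤ ((H × K) ⧸ M))
    (hubar : ubar = MonoidAlgebra.mapDomainRingHom ℤ (QuotientGroup.mk' M) u)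
    (htrbar : ∀ w : ℕ,
      (∑ y : (H × K) ⧸ M, if orderOf y = w then ubar.coeff y else 0) ≠ 0 →
      w = orderOf ubar)
    (hHertweck : ∀ g : H × K,
      (∀ h : H × K, IsPPart p g h → orderOf h < p ^ m) →
      (∑ x : H × K, if IsConj g x then u.coeff x else 0) = 0)
    (hOrd : ∀ g : H × K, ¬ orderOf g ∣ orderOf u →
      (∑ x : H × K, if IsConj g x then u.coeff x else 0) = 0)
    (hker : ∀ v : MonoidAlgebra ℤ (H × K), IsUnit v →
      (∃ n : ℕ, 0 < n ∧ v ^ n = 1) →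
      MonoidAlgebra.mapDomainRingHom ℤ (QuotientGroup.mk' M) v = 1 →
      ∃ a : ℕ, orderOf v = p ^ a) :
    ∀ j : ℕ, j ≠ orderOf u →
      (∑ g : H × K, if orderOf g = j then u.coeff g else 0) = 0 := by
  intro j hj
  have hpos : 0 < orderOf u := hord ▸ Nat.pos_of_ne_zero
    (mul_ne_zero (pow_ne_zero m hp.ne_zero) (by rintro rfl; exact hk (dvd_zero p)))
  obtain ⟨a, ha⟩ := hker (u ^ orderOf ubar) (hu.pow _)
    ⟨orderOf u, hpos, by rw [← pow_mul, mul_comm, pow_mul, pow_orderOf_eq_one, one_pow]⟩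
    (by rw [map_pow, ← hubar, pow_orderOf_eq_one])
  rw [hubar] at ha
  have hubar_ordCompl : ordCompl[p] (orderOf ubar) = ordCompl[p] (p ^ m * k) := by
    rw [hubar, ordCompl_orderOf_map_eq hp _ (orderOf_pos_iff.mp hpos) ha, hord]
  rw [hord] at hOrd hj
  have hε : ∀ g : H × K, ¬ (p ^ m ∣ orderOf g ∧ orderOf g ∣ p ^ m * k) →
      ∑ x, (if IsConj g x then u.coeff x else 0) = 0 := by
    intro g hg
    by_cases hdvd : orderOf g ∣ p ^ m * k
    · exact hHertweck g fun h hh => hh.orderOf_lt hp.one_lt fun hm => hg ⟨hm, hdvd⟩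
    · exact hOrd g hdvd
  by_cases hj_dvd : p ^ m ∣ j ∧ j ∣ p ^ m * k
  · rw [sum_ite_orderOf_eq_sum_ite_ordCompl_orderOf _ hp hk hε hj_dvd,
      ← sum_ite_ordCompl_orderOf_mapDomain hp hM, ← hubar]
    refine sum_ite_orderOf_eq_zero _ htrbar (Q := (ordCompl[p] · = ordCompl[p] j)) fun h => hj ?_
    exact Nat.eq_of_ordCompl_eq hp hk hj_dvd ⟨dvd_mul_right _ _, dvd_rfl⟩
      (h.symm.trans hubar_ordCompl)
  · exact sum_ite_eq_zero_of_sum_conj_eq_zero _ (fun _ _ hgx => hgx.orderOf_eq ▸ id)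
      fun g hg => hε g (hg ▸ hj_dvd)

/-- Proposition 5.13: let `D = H × K` be a direct product of finite groups,
`p` a prime, `M` a normal `p`-subgroup of `D`, and `u` a normalized torsion unit
of `ℤD` of order `p^m·k` with `gcd(p,k) = 1`. Let `ū` be the image of `u` in
`ℤ(D/M)`; assume `o(ū) < o(u)` and that the generalized trace of `ū` is nonzero
only at `o(ū)`. Assuming further (Hertweck) that `ε_g(u) = 0` whenever the
`p`-part of `g` has order less than `p^m`, that `ε_g(u) = 0` unless `o(g)`
divides `o(u)`, and that torsion units of `ℤD` mapping to `1` in `ℤ(D/M)` are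
`p`-elements, we have `ε_{D[j]}(u) = 0` for all `j ≠ o(u)`. -/
theorem generalized_trace_vanishing {H K : Type*} [Group H] [Group K]
    [Fintype H] [Fintype K]
    (p : ℕ) (hp : p.Prime)
    (M : Subgroup (H × K)) [M.Normal] (hM : IsPGroup p M)
    (u : MonoidAlgebra ℤ (H × K)) (hu : IsUnit u)
    (haug : ∑ g : H × K, u.coeff g = 1)
    (m k : ℕ) (hk : ¬ p ∣ k) (hord : orderOf u = p ^ m * k)
    (ubar : MonoidAlgebra ℤ ((H × K) ⧸ M))
    (hubar : ubar = MonoidAlgebra.mapDomainRingHom ℤ (QuotientGroup.mk' M) u)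
    (hlt : orderOf ubar < orderOf u)
    (htrbar : ∀ w : ℕ,
      (∑ y : (H × K) ⧸ M, if orderOf y = w then ubar.coeff y else 0) ≠ 0 →
      w = orderOf ubar)
    (hHertweck : ∀ g : H × K,
      (∀ h : H × K, IsPPart p g h → orderOf h < p ^ m) →
      (∑ x : H × K, if IsConj g x then u.coeff x else 0) = 0)
    (hOrd : ∀ g : H × K, ¬ orderOf g ∣ orderOf u →
      (∑ x : H × K, if IsConj g x then u.coeff x else 0) = 0)
    (hker : ∀ v : MonoidAlgebra ℤ (H × K), IsUnit v →
      (∃ n : ℕ, 0 < n ∧ v ^ n = 1) →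
      MonoidAlgebra.mapDomainRingHom ℤ (QuotientGroup.mk' M) v = 1 →
      ∃ a : ℕ, orderOf v = p ^ a) :
    ∀ j : ℕ, j ≠ orderOf u →
      (∑ g : H × K, if orderOf g = j then u.coeff g else 0) = 0 :=
  generalized_trace_vanishing_general p hp M hM u hu m k hk hord ubar hubar htrbar hHertweck hOrd
    hker
end
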